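/- arXiv:2212.07821 — 7 statements merged into one kernel-verified Lean document; each statement's English description precedes it below -/
import Mathlib

section
/- Let L be a set of s non-negative integers and let F be a family of subsets of [n] that is Sperner (no member contains another) and L-intersecting (the intersection of any two distinct members has size in L). Then |F| ≤ ∑_{i=0}^{s} C(n-1, i). -/
/-!
Fix a point `e`. To `A ∈ F` attach the function
`Y ↦ ∏_{l ∈ L, l < |A|} (|A ∩ (Y ∪ {e})| - l)`, a multilinear polynomial of degree at most `s`
in the variables indexed by `[n] \ {e}`; these span a space of dimension at most
`∑_{i ≤ s} C(n - 1, i)`. The function of `A` is nonzero at `A \ {e}`, and at `B \ {e}` with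
`B ≠ A` it vanishes unless `e ∈ A \ B`, because the Sperner property gives `|A ∩ B| < |A|`.
Listing the members containing `e` first, the evaluation matrix is triangular, so the functions
are linearly independent.
-/

open Finset

section LowDegree

variable {α K : Type*} [DecidableEq α] [Field K]

def subsetIndicator (S : Finset α) : Finset α → K :=
  fun Y => if S ⊆ Y then 1 else 0

theorem subsetIndicator_mul (S T : Finset α) :
    subsetIndicator S * subsetIndicator T = (subsetIndicator (S ∪ T) : Finset α → K) := by
  funext Y
  simp only [subsetIndicator, Pi.mul_apply, union_subset_iff]
  split_ifs <;> simp_all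

theorem natCast_card_inter_eq_sum_subsetIndicator (A : Finset α) :
    (fun Y => ((A ∩ Y).card : K)) = ∑ k ∈ A, subsetIndicator {k} := by
  funext Y
  simp [subsetIndicator]

variable (K) in
/-- Multilinear polynomials of degree at most `t` in the variables indexed by `U`, as functions on
subsets: `subsetIndicator S` is the monomial `∏_{i ∈ S} y_i`. -/
def lowDegree (U : Finset α) (t : ℕ) : Submodule K (Finset α → K) :=
  Submodule.span K
    (Set.range fun S : U.powerset.filter (·.card ≤ t) => subsetIndicator (S : Finset α))

theorem subsetIndicator_mem_lowDegree {U S : Finset α} {t : ℕ} (hSU : S ⊆ U)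
    (hS : S.card ≤ t) :
    subsetIndicator S ∈ lowDegree K U t :=
  Submodule.subset_span ⟨⟨S, mem_filter.mpr ⟨mem_powerset.mpr hSU, hS⟩⟩, rfl⟩

theorem lowDegree_mono (U : Finset α) {t t' : ℕ} (h : t ≤ t') :
    lowDegree K U t ≤ lowDegree K U t' := by
  refine Submodule.span_le.mpr ?_
  rintro _ ⟨⟨S, hS⟩, rfl⟩
  rw [mem_filter, mem_powerset] at hS
  exact subsetIndicator_mem_lowDegree hS.1 (hS.2.trans h)

theorem card_inter_add_mul_mem_lowDegree {U A : Finset α} (hAU : A ⊆ U) (r : K) {t : ℕ}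
    {f : Finset α → K} (hf : f ∈ lowDegree K U t) :
    (fun Y => ((A ∩ Y).card : K) + r) * f ∈ lowDegree K U (t + 1) := by
  rw [lowDegree] at hf
  induction hf using Submodule.span_induction with
  | mem g hg =>
    obtain ⟨⟨S, hS⟩, rfl⟩ := hg
    dsimp only
    rw [mem_filter, mem_powerset] at hS
    have hlin : (fun Y => ((A ∩ Y).card : K) + r) =
        r • subsetIndicator ∅ + ∑ k ∈ A, subsetIndicator {k} := by
      rw [← natCast_card_inter_eq_sum_subsetIndicator]
      funext Y
      simp [subsetIndicator, add_comm]
    rw [hlin, add_mul, smul_mul_assoc, subsetIndicator_mul, empty_union, sum_mul]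
    refine add_mem (Submodule.smul_mem _ _ (subsetIndicator_mem_lowDegree hS.1 (by omega)))
      (sum_mem fun k hk => ?_)
    rw [subsetIndicator_mul]
    exact subsetIndicator_mem_lowDegree (union_subset (singleton_subset_iff.mpr (hAU hk)) hS.1)
      ((card_union_le _ _).trans (by rw [card_singleton]; omega))
  | zero => simp
  | add f g _ _ hf hg => rw [mul_add]; exact add_mem hf hg
  | smul c f _ hf => rw [mul_smul_comm]; exact Submodule.smul_mem _ _ hf

theorem prod_card_inter_add_mem_lowDegree {ι : Type*} {U A : Finset α} (hAU : A ⊆ U)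
    (T : Finset ι) (r : ι → K) :
    (fun Y => ∏ l ∈ T, (((A ∩ Y).card : K) + r l)) ∈ lowDegree K U T.card := by
  classical
  induction T using Finset.induction_on with
  | empty =>
    simp only [prod_empty, card_empty]
    convert subsetIndicator_mem_lowDegree (K := K) (t := 0) (empty_subset U) card_empty.le
    simp [subsetIndicator]
  | insert a T ha ih =>
    rw [card_insert_of_notMem ha]
    convert card_inter_add_mul_mem_lowDegree hAU (r a) ih using 1
    funext Y
    simp [prod_insert ha]

theorem finrank_lowDegree_le (U : Finset α) (t : ℕ) :
    Module.finrank K (lowDegree K U t) ≤ ∑ i ∈ range (t + 1), U.card.choose i := by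
  calc Module.finrank K (lowDegree K U t)
      ≤ (U.powerset.filter (·.card ≤ t)).card :=
        (finrank_range_le_card (R := K) _).trans_eq (Fintype.card_coe _)
    _ ≤ ((range (t + 1)).biUnion fun i => U.powersetCard i).card := by
        refine card_le_card fun S hS => ?_
        rw [mem_filter, mem_powerset] at hS
        exact mem_biUnion.mpr
          ⟨S.card, mem_range.mpr (by omega), mem_powersetCard.mpr ⟨hS.1, rfl⟩⟩
    _ ≤ ∑ i ∈ range (t + 1), (U.powersetCard i).card := card_biUnion_le
    _ = ∑ i ∈ range (t + 1), U.card.choose i := by simp_rw [card_powersetCard]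

end LowDegree

theorem linearIndependent_of_eval_triangular {ι X K : Type*} [Fintype ι] [Field K]
    (f : ι → X → K) (x : ι → X) (ρ : ι → ℕ) (hdiag : ∀ i, f i (x i) ≠ 0)
    (hzero : ∀ i j, i ≠ j → ρ j ≤ ρ i → f i (x j) = 0) : LinearIndependent K f := by
  rw [Fintype.linearIndependent_iff]
  intro g hg j
  induction hρ : ρ j using Nat.strong_induction_on generalizing j with
  | _ m ih =>
    have hsum : ∑ i, g i * f i (x j) = 0 := by simpa using congrFun hg (x j)
    rw [sum_eq_single j (fun i _ hij => ?_) (by simp)] at hsum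
    · exact (mul_eq_zero.mp hsum).resolve_right (hdiag j)
    · rcases lt_or_ge (ρ i) m with hlt | hge
      · rw [ih _ hlt i rfl, zero_mul]
      · rw [hzero i j hij (hρ ▸ hge), mul_zero]

section IntersectionPoly

variable {α : Type*} [DecidableEq α]

/-- `|A.erase e ∩ Y| + [e ∈ A] = |A ∩ insert e Y|`, so this is the polynomial `∏ (|A ∩ y| - l)`
with the variable `y_e` set to `1`. -/
def intersectionPoly (L : Finset ℕ) (e : α) (A : Finset α) : Finset α → ℚ :=
  fun Y => ∏ l ∈ L.filter (· < A.card),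
    (((A.erase e ∩ Y).card : ℚ) + ((if e ∈ A then 1 else 0) - l))

theorem card_erase_inter_erase_add_ite {e : α} {A B : Finset α} (h : e ∈ B ∨ e ∉ A) :
    (A.erase e ∩ B.erase e).card + (if e ∈ A then 1 else 0) = (A ∩ B).card := by
  rw [erase_inter, inter_erase, erase_idem]
  split_ifs with heA
  · exact card_erase_add_one (mem_inter.mpr ⟨heA, h.resolve_right (not_not.mpr heA)⟩)
  · rw [erase_eq_of_notMem fun he => heA (mem_inter.mp he).1, add_zero]

theorem intersectionPoly_apply_erase (L : Finset ℕ) {e : α} {A B : Finset α}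
    (h : e ∈ B ∨ e ∉ A) :
    intersectionPoly L e A (B.erase e) =
      ∏ l ∈ L.filter (· < A.card), (((A ∩ B).card : ℚ) - l) := by
  refine prod_congr rfl fun l _ => ?_
  rw [← card_erase_inter_erase_add_ite h]
  push_cast
  ring

theorem intersectionPoly_apply_erase_self_ne_zero (L : Finset ℕ) (e : α) (A : Finset α) :
    intersectionPoly L e A (A.erase e) ≠ 0 := by
  rw [intersectionPoly_apply_erase L (em' (e ∈ A)).symm, inter_self, prod_ne_zero_iff]
  intro l hl
  exact sub_ne_zero.mpr (by exact_mod_cast ((mem_filter.mp hl).2).ne')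

theorem intersectionPoly_apply_erase_eq_zero {L : Finset ℕ} {e : α} {A B : Finset α}
    (hL : (A ∩ B).card ∈ L) (hAB : ¬ A ⊆ B) (h : e ∈ B ∨ e ∉ A) :
    intersectionPoly L e A (B.erase e) = 0 := by
  rw [intersectionPoly_apply_erase L h]
  refine prod_eq_zero (i := (A ∩ B).card) (mem_filter.mpr ⟨hL, ?_⟩) (sub_self _)
  exact card_lt_card ⟨inter_subset_left, fun hA => hAB fun x hx => (mem_inter.mp (hA hx)).2⟩

theorem intersectionPoly_mem_lowDegree (L : Finset ℕ) {e : α} {U A : Finset α}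
    (hAU : A.erase e ⊆ U) : intersectionPoly L e A ∈ lowDegree ℚ U L.card :=
  lowDegree_mono U (card_filter_le _ _) (prod_card_inter_add_mem_lowDegree hAU _ _)

end IntersectionPoly

theorem card_le_sum_choose_of_isAntichain_of_pairwise_card_inter_mem {α : Type*} [Fintype α]
    [DecidableEq α] (e : α) (L : Finset ℕ) (F : Finset (Finset α))
    (hSperner : IsAntichain (· ⊆ ·) (F : Set (Finset α)))
    (hInt : (F : Set (Finset α)).Pairwise fun A B => (A ∩ B).card ∈ L) :
    F.card ≤ ∑ i ∈ range (L.card + 1), (Fintype.card α - 1).choose i := by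
  let f : F → Finset α → ℚ := fun A => intersectionPoly L e A
  have hli : LinearIndependent ℚ f := by
    refine linearIndependent_of_eval_triangular f (fun B => B.1.erase e)
      (fun B => if e ∈ B.1 then 0 else 1)
      (fun A => intersectionPoly_apply_erase_self_ne_zero L e A) fun A B hAB hρ => ?_
    have hne : A.1 ≠ B.1 := Subtype.coe_injective.ne hAB
    refine intersectionPoly_apply_erase_eq_zero (hInt A.2 B.2 hne) (hSperner A.2 B.2 hne) ?_
    by_cases heB : e ∈ B.1
    · exact Or.inl heB
    · right
      intro heA
      simp [heA, heB] at hρ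
  have hspan : Submodule.span ℚ (Set.range f) ≤ lowDegree ℚ (univ.erase e) L.card :=
    Submodule.span_le.mpr <| by
      rintro _ ⟨A, rfl⟩
      exact intersectionPoly_mem_lowDegree L (erase_subset_erase e (subset_univ A.1))
  calc F.card = Module.finrank ℚ (Submodule.span ℚ (Set.range f)) :=
        (Fintype.card_coe F).symm.trans (finrank_span_eq_card hli).symm
    _ ≤ Module.finrank ℚ (lowDegree ℚ (univ.erase e) L.card) := Submodule.finrank_mono hspan
    _ ≤ _ := by
        simpa [card_erase_of_mem (mem_univ e)] using
          finrank_lowDegree_le (K := ℚ) (univ.erase e) L.card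

theorem stmt_0 (n s : ℕ) (L : Finset ℕ) (hL : L.card = s)
    (F : Finset (Finset (Fin n)))
    (hSperner : ∀ A ∈ F, ∀ B ∈ F, A ≠ B → ¬ A ⊆ B)
    (hInt : ∀ A ∈ F, ∀ B ∈ F, A ≠ B → (A ∩ B).card ∈ L) :
    F.card ≤ ∑ i ∈ Finset.range (s + 1), (n - 1).choose i := by
  rcases n.eq_zero_or_pos with rfl | hn
  · calc F.card ≤ Fintype.card (Finset (Fin 0)) := card_le_univ F
      _ ≤ _ := by simp [sum_range_succ']
  · subst hL
    simpa using card_le_sum_choose_of_isAntichain_of_pairwise_card_inter_mem ⟨0, hn⟩ L F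
      (fun A hA B hB => hSperner A hA B hB) (fun A hA B hB => hInt A hA B hB)
end

section
/- Let L be a set of s non-negative integers and K = {k₁, ..., k_r} a set of positive integers with max L < min K. There exists n₀ such that for all n ≥ n₀, any L-intersecting family F with every member a subset of [n] of size in K satisfies |F| ≤ C(n, s). -/
open Finset

lemma asm1 (m lam X Fc Gc Hc : ℕ) (hm1 : 1 ≤ m) (hlam : lam ≤ m) (hX1 : 1 ≤ X)
    (hcard : Fc ≤ m^lam * (Gc + lam)) (hGX : Gc ≤ (m+1)*m*(X+1) + (m+1)) :
    Fc ≤ (m+1)^(m+3) * (X+1) := by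
  have hmpow : m^lam ≤ (m+1)^m :=
    le_trans (Nat.pow_le_pow_left (by omega) lam) (Nat.pow_le_pow_right (by omega) hlam)
  have hinner : Gc + lam ≤ (m+1)^3 * (X+1) := by
    have h4 : (m+1)^3 = (m+1)*(m+1)*(m+1) := by ring
    nlinarith
  calc Fc ≤ m^lam * (Gc + lam) := hcard
  _ ≤ (m+1)^m * ((m+1)^3 * (X+1)) := Nat.mul_le_mul hmpow hinner
  _ = (m+1)^(m+3) * (X+1) := by ring

lemma asm2 (m lam X Fc Gc : ℕ) (hm1 : 1 ≤ m) (hlam : lam ≤ m) (hX1 : 1 ≤ X)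
    (hcard : Fc ≤ m^lam * (Gc + lam)) (hGX : Gc ≤ m+1) :
    Fc ≤ (m+1)^(m+3) * (X+1) := by
  have hmpow : m^lam ≤ (m+1)^m :=
    le_trans (Nat.pow_le_pow_left (by omega) lam) (Nat.pow_le_pow_right (by omega) hlam)
  have hinner : Gc + lam ≤ (m+1)^3 * (X+1) := by
    have h5 : Gc + lam ≤ (m+1)*(m+1)*(m+1) := by nlinarith
    calc Gc + lam ≤ (m+1)*(m+1)*(m+1) := h5
    _ = (m+1)^3 * 1 := by ring
    _ ≤ (m+1)^3 * (X+1) := Nat.mul_le_mul_left _ (by omega)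
  calc Fc ≤ m^lam * (Gc + lam) := hcard
  _ ≤ (m+1)^m * ((m+1)^3 * (X+1)) := Nat.mul_le_mul hmpow hinner
  _ = (m+1)^(m+3) * (X+1) := by ring


-- arith1: n * C(n,k) ≤ (k+2) * C(n,k+1) when (k+1)^2 ≤ n
lemma arith1 (k n : ℕ) (hn : (k+1)*(k+1) ≤ n) :
    n * n.choose k ≤ (k+2) * n.choose (k+1) := by
  have key := Nat.choose_succ_right_eq n k
  have hkn : k ≤ n := by nlinarith
  have h1 : n * (k+1) ≤ (k+2) * (n - k) := by
    have : n - k + k = n := Nat.sub_add_cancel hkn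
    nlinarith [this]
  have : n * n.choose k * (k+1) ≤ (k+2) * n.choose (k+1) * (k+1) := by
    calc n * n.choose k * (k+1) = (n * (k+1)) * n.choose k := by ring
    _ ≤ ((k+2) * (n - k)) * n.choose k := Nat.mul_le_mul_right _ h1
    _ = (k+2) * (n.choose k * (n - k)) := by ring
    _ = (k+2) * (n.choose (k+1) * (k+1)) := by rw [key]
    _ = (k+2) * n.choose (k+1) * (k+1) := by ring
  exact Nat.le_of_mul_le_mul_right this (by omega)

-- arith2: a * (C(n,k) + 1) ≤ C(n,k+1) when (k+1) + 2*a*(k+1) ≤ n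
lemma arith2 (a k n : ℕ) (hn : (k+1) + 2*a*(k+1) ≤ n) :
    a * (n.choose k + 1) ≤ n.choose (k+1) := by
  have key := Nat.choose_succ_right_eq n k
  have hkn : k ≤ n := by omega
  have hX : 1 ≤ n.choose k := Nat.choose_pos hkn
  have h1 : 2*a*(k+1) ≤ n - k := by omega
  have h2 : n.choose (k+1) * (k+1) ≥ (2*a) * n.choose k * (k+1) := by
    calc n.choose (k+1) * (k+1) = n.choose k * (n - k) := key
    _ ≥ n.choose k * (2*a*(k+1)) := Nat.mul_le_mul_left _ h1
    _ = (2*a) * n.choose k * (k+1) := by ring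
  have h3 : (2*a) * n.choose k ≤ n.choose (k+1) := Nat.le_of_mul_le_mul_right h2 (by omega)
  calc a * (n.choose k + 1) ≤ a * (n.choose k + n.choose k) := by
        exact Nat.mul_le_mul_left _ (by omega)
  _ = 2*a * n.choose k := by ring
  _ ≤ n.choose (k+1) := h3

-- Lemma A : if all elements of L are < s and |L| = s, injection into s-subsets
lemma lemA {n : ℕ} (s : ℕ) (hs : 1 ≤ s) (L K : Finset ℕ) (hLcard : L.card = s)
    (hLlt : ∀ ℓ ∈ L, ℓ < s) (hLK : ∀ ℓ ∈ L, ∀ k ∈ K, ℓ < k)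
    (F : Finset (Finset (Fin n))) (hFK : ∀ A ∈ F, A.card ∈ K)
    (hFL : ∀ A ∈ F, ∀ B ∈ F, A ≠ B → (A ∩ B).card ∈ L) :
    F.card ≤ n.choose s := by
  have hLeq : L = Finset.range s := by
    apply Finset.eq_of_subset_of_card_le (fun ℓ hℓ => Finset.mem_range.mpr (hLlt ℓ hℓ))
    rw [Finset.card_range, hLcard]
  have hsK : ∀ k ∈ K, s ≤ k := by
    intro k hk
    have : s - 1 ∈ L := by rw [hLeq]; exact Finset.mem_range.mpr (by omega)
    have := hLK _ this k hk
    omega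
  have hsF : ∀ A ∈ F, s ≤ A.card := fun A hA => hsK _ (hFK A hA)
  classical
  set f : Finset (Fin n) → Finset (Fin n) := fun A =>
    if h : s ≤ A.card then (A.exists_subset_card_eq h).choose else ∅ with hf
  have hfspec : ∀ A ∈ F, f A ⊆ A ∧ (f A).card = s := by
    intro A hA
    have h := hsF A hA
    have := (A.exists_subset_card_eq h).choose_spec
    simp only [hf, dif_pos h]
    exact this
  have : F.card ≤ (Finset.powersetCard s (Finset.univ : Finset (Fin n))).card := by
    apply Finset.card_le_card_of_injOn f
    · intro A hA
      rw [Finset.mem_coe, Finset.mem_powersetCard_univ]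
      exact (hfspec A hA).2
    · intro A hA B hB hfAB
      by_contra hne
      have h1 : f A ⊆ A ∩ B := by
        apply Finset.subset_inter (hfspec A hA).1
        rw [hfAB]; exact (hfspec B hB).1
      have h2 : s ≤ (A ∩ B).card := by
        have := Finset.card_le_card h1
        rw [(hfspec A hA).2] at this; exact this
      have := hLlt _ (hFL A hA B hB hne)
      omega
  rwa [Finset.card_powersetCard, Finset.card_univ, Fintype.card_fin] at this

lemma doublecount {n : ℕ} (F : Finset (Finset (Fin n))) :
    ∑ A ∈ F, A.card = ∑ x : Fin n, (F.filter (fun A => x ∈ A)).card := by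
  classical
  simp only [Finset.card_filter]
  rw [Finset.sum_comm]
  apply Finset.sum_congr rfl
  intro A _
  rw [Finset.card_eq_sum_ones A]
  rw [← Finset.sum_filter]
  congr 1
  ext x
  simp

-- the 0 ∈ L case, given IH at level t (with s = t+1)
lemma lem0 {n m t : ℕ} (hn : (t+1)*(t+1) ≤ n)
    (L K : Finset ℕ) (hLcard : L.card = t+1) (h0 : 0 ∈ L)
    (hKm : ∀ k ∈ K, 0 < k ∧ k ≤ m) (hLK : ∀ ℓ ∈ L, ∀ k ∈ K, ℓ < k)
    (IH : ∀ L' K' : Finset ℕ, L'.card = t → (∀ k ∈ K', 0 < k ∧ k ≤ m) →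
      (∀ ℓ ∈ L', ∀ k ∈ K', ℓ < k) →
      ∀ F' : Finset (Finset (Fin n)), (∀ A ∈ F', A.card ∈ K') →
      (∀ A ∈ F', ∀ B ∈ F', A ≠ B → (A ∩ B).card ∈ L') → F'.card ≤ n.choose t)
    (F : Finset (Finset (Fin n))) (hFK : ∀ A ∈ F, A.card ∈ K)
    (hFL : ∀ A ∈ F, ∀ B ∈ F, A ≠ B → (A ∩ B).card ∈ L) :
    F.card ≤ n.choose (t+1) := by
  classical
  by_cases hcase : ∀ ℓ ∈ L, ℓ < t+1
  · exact lemA (t+1) (by omega) L K hLcard hcase hLK F hFK hFL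
  · push_neg at hcase
    obtain ⟨ℓ₀, hℓ₀L, hℓ₀⟩ := hcase
    have hK2 : ∀ k ∈ K, t+2 ≤ k := by
      intro k hk; have := hLK ℓ₀ hℓ₀L k hk; omega
    -- link families
    have hdeg : ∀ x : Fin n, (F.filter (fun A => x ∈ A)).card ≤ n.choose t := by
      intro x
      set Fx := F.filter (fun A => x ∈ A) with hFx
      set Gx := Fx.image (fun A => A.erase x) with hGx
      have hinj : Set.InjOn (fun A : Finset (Fin n) => A.erase x) (Fx : Set (Finset (Fin n))) := by
        intro A hA B hB h
        have hAx : x ∈ A := (Finset.mem_filter.mp (Finset.mem_coe.mp hA)).2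
        have hBx : x ∈ B := (Finset.mem_filter.mp (Finset.mem_coe.mp hB)).2
        have h' : A.erase x = B.erase x := h
        rw [← Finset.insert_erase hAx, ← Finset.insert_erase hBx, h']
      have hcardeq : Gx.card = Fx.card := Finset.card_image_of_injOn hinj
      rw [← hcardeq]
      set L' := (L.erase 0).image (fun ℓ => ℓ - 1) with hL'
      set K' := K.image (fun k => k - 1) with hK'
      apply IH L' K'
      · have hinjL : Set.InjOn (fun ℓ => ℓ - 1) ((L.erase 0) : Set ℕ) := by
          intro a ha b hb hab
          have ha' := Finset.mem_erase.mp (Finset.mem_coe.mp ha)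
          have hb' := Finset.mem_erase.mp (Finset.mem_coe.mp hb)
          have hab' : a - 1 = b - 1 := hab
          omega
        rw [hL', Finset.card_image_of_injOn hinjL, Finset.card_erase_of_mem h0, hLcard]
        omega
      · intro k' hk'
        rw [hK'] at hk'
        obtain ⟨k, hk, rfl⟩ := Finset.mem_image.mp hk'
        have := hKm k hk; have := hK2 k hk; omega
      · intro ℓ' hℓ' k' hk'
        rw [hL'] at hℓ'; rw [hK'] at hk'
        obtain ⟨ℓ, hℓ, rfl⟩ := Finset.mem_image.mp hℓ'
        obtain ⟨k, hk, rfl⟩ := Finset.mem_image.mp hk'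
        have hℓe := Finset.mem_erase.mp hℓ
        have := hLK ℓ hℓe.2 k hk
        have := hK2 k hk
        omega
      · intro A' hA'
        obtain ⟨A, hA, rfl⟩ := Finset.mem_image.mp hA'
        have hAmem := Finset.mem_filter.mp hA
        rw [Finset.card_erase_of_mem hAmem.2, hK']
        exact Finset.mem_image.mpr ⟨A.card, hFK A hAmem.1, rfl⟩
      · intro A' hA' B' hB' hne
        obtain ⟨A, hA, rfl⟩ := Finset.mem_image.mp hA'
        obtain ⟨B, hB, rfl⟩ := Finset.mem_image.mp hB'
        have hAmem := Finset.mem_filter.mp hA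
        have hBmem := Finset.mem_filter.mp hB
        have hAB : A ≠ B := by rintro rfl; exact hne rfl
        have hint : A.erase x ∩ B.erase x = (A ∩ B).erase x := by
          ext y; simp only [Finset.mem_inter, Finset.mem_erase]; tauto
        have hxAB : x ∈ A ∩ B := Finset.mem_inter.mpr ⟨hAmem.2, hBmem.2⟩
        rw [hint, Finset.card_erase_of_mem hxAB]
        have hABL := hFL A hAmem.1 B hBmem.1 hAB
        have hpos : 0 < (A ∩ B).card := Finset.card_pos.mpr ⟨x, hxAB⟩
        rw [hL']
        apply Finset.mem_image.mpr
        exact ⟨(A ∩ B).card, Finset.mem_erase.mpr ⟨by omega, hABL⟩, rfl⟩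
    -- double counting
    have hlow : F.card * (t+2) ≤ ∑ A ∈ F, A.card := by
      have := Finset.card_nsmul_le_sum F (fun A => A.card) (t+2)
        (fun A hA => hK2 _ (hFK A hA))
      simpa [smul_eq_mul] using this
    have hup : ∑ x : Fin n, (F.filter (fun A => x ∈ A)).card ≤ n * n.choose t := by
      have := Finset.sum_le_card_nsmul Finset.univ
        (fun x => (F.filter (fun A => x ∈ A)).card) (n.choose t) (fun x _ => hdeg x)
      simpa [smul_eq_mul, Finset.card_univ] using this
    have hmain : F.card * (t+2) ≤ (t+2) * n.choose (t+1) := by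
      calc F.card * (t+2) ≤ ∑ A ∈ F, A.card := hlow
      _ = ∑ x : Fin n, (F.filter (fun A => x ∈ A)).card := doublecount F
      _ ≤ n * n.choose t := hup
      _ ≤ (t+2) * n.choose (t+1) := arith1 t n hn
    have := Nat.le_of_mul_le_mul_right (by linarith [hmain] : F.card * (t+2) ≤ n.choose (t+1) * (t+2)) (by omega : 0 < t+2)
    exact this

lemma grow {n m lam : ℕ} (L K : Finset ℕ) (hKm : ∀ k ∈ K, 0 < k ∧ k ≤ m)
    (hlamL : lam ∈ L) (hLK : ∀ ℓ ∈ L, ∀ k ∈ K, ℓ < k) (hlamle : ∀ ℓ ∈ L, lam ≤ ℓ)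
    (hlamm : lam < m) (hmn : m ≤ n)
    (F : Finset (Finset (Fin n))) (hFK : ∀ A ∈ F, A.card ∈ K)
    (hFL : ∀ A ∈ F, ∀ B ∈ F, A ≠ B → (A ∩ B).card ∈ L) :
    ∀ i, i ≤ lam → ∃ (D : Finset (Fin n)) (G : Finset (Finset (Fin n))),
      G ⊆ F ∧ D.card = i ∧ (∀ A ∈ G, D ⊆ A) ∧ F.card ≤ m^i * (G.card + i) := by
  classical
  have hm : 1 ≤ m := by omega
  intro i
  induction i with
  | zero =>
    intro _
    exact ⟨∅, F, Finset.Subset.refl F, Finset.card_empty, fun A _ => Finset.empty_subset A,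
      by simp⟩
  | succ i ih =>
    intro hi
    obtain ⟨D, G, hGF, hD, hDG, hcard⟩ := ih (by omega)
    by_cases hGne : G.Nonempty
    · obtain ⟨A', hA'⟩ := hGne
      have hA'F : A' ∈ F := hGF hA'
      have hA'K : A'.card ∈ K := hFK A' hA'F
      have hA'm : A'.card ≤ m := (hKm _ hA'K).2
      have hlamA : lam < A'.card := hLK lam hlamL _ hA'K
      set t := A' \ D with ht
      have htne : t.Nonempty := by
        rw [ht, Finset.sdiff_nonempty]
        intro hsub
        have := Finset.card_le_card hsub
        omega
      have cover : G.erase A' ⊆ t.biUnion (fun y => G.filter (fun C => y ∈ C)) := by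
        intro C hC
        obtain ⟨hCne, hCG⟩ := Finset.mem_erase.mp hC
        have hCL : (C ∩ A').card ∈ L := hFL C (hGF hCG) A' hA'F hCne
        have hlamC : lam ≤ (C ∩ A').card := hlamle _ hCL
        have hnsub : ¬ (C ∩ A' ⊆ D) := by
          intro hsub
          have := Finset.card_le_card hsub
          omega
        obtain ⟨x, hx⟩ := Finset.sdiff_nonempty.mpr hnsub
        rw [Finset.mem_sdiff, Finset.mem_inter] at hx
        apply Finset.mem_biUnion.mpr
        exact ⟨x, Finset.mem_sdiff.mpr ⟨hx.1.2, hx.2⟩,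
          Finset.mem_filter.mpr ⟨hCG, hx.1.1⟩⟩
      obtain ⟨x, hxt, hxmax⟩ := t.exists_max_image
        (fun y => (G.filter (fun C => y ∈ C)).card) htne
      set G' := G.filter (fun C => x ∈ C) with hG'
      have htm : t.card ≤ m := le_trans (Finset.card_le_card Finset.sdiff_subset) hA'm
      have h1 : G.card - 1 ≤ m * G'.card := by
        calc G.card - 1 = (G.erase A').card := (Finset.card_erase_of_mem hA').symm
        _ ≤ (t.biUnion (fun y => G.filter (fun C => y ∈ C))).card :=
            Finset.card_le_card cover
        _ ≤ ∑ y ∈ t, (G.filter (fun C => y ∈ C)).card := Finset.card_biUnion_le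
        _ ≤ t.card * G'.card := by
            have := Finset.sum_le_card_nsmul t
              (fun y => (G.filter (fun C => y ∈ C)).card) (G'.card)
              (fun y hy => hxmax y hy)
            simpa [smul_eq_mul] using this
        _ ≤ m * G'.card := Nat.mul_le_mul_right _ htm
      have hxD : x ∉ D := (Finset.mem_sdiff.mp hxt).2
      refine ⟨insert x D, G', (Finset.filter_subset _ _).trans hGF,
        by rw [Finset.card_insert_of_notMem hxD, hD], ?_, ?_⟩
      · intro A hA
        have hA' := Finset.mem_filter.mp hA
        exact Finset.insert_subset hA'.2 (hDG A hA'.1)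
      · have hG2 : G.card ≤ m * G'.card + 1 := by omega
        calc F.card ≤ m^i * (G.card + i) := hcard
        _ ≤ m^i * ((m * G'.card + 1) + i) := Nat.mul_le_mul_left _ (by omega)
        _ ≤ m^i * (m * (G'.card + (i+1))) := by
            apply Nat.mul_le_mul_left
            nlinarith
        _ = m^(i+1) * (G'.card + (i+1)) := by ring
    · have hGe : G = ∅ := Finset.not_nonempty_iff_eq_empty.mp hGne
      have hDltn : D.card < n := by omega
      have hcompl : (Dᶜ : Finset (Fin n)).Nonempty := by
        apply Finset.card_pos.mp
        rw [Finset.card_compl, Fintype.card_fin]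
        omega
      obtain ⟨x, hx⟩ := hcompl
      have hxD : x ∉ D := Finset.mem_compl.mp hx
      refine ⟨insert x D, ∅, Finset.empty_subset F,
        by rw [Finset.card_insert_of_notMem hxD, hD], fun A hA => absurd hA (by simp), ?_⟩
      rw [hGe] at hcard
      calc F.card ≤ m^i * (0 + i) := hcard
      _ ≤ m^i * (m * (0 + (i+1))) := by
          apply Nat.mul_le_mul_left
          nlinarith
      _ = m^(i+1) * (0 + (i+1)) := by ring

lemma lemPos {n m t : ℕ} (L K : Finset ℕ) (hLcard : L.card = t+1) (h0 : 0 ∉ L)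
    (hKm : ∀ k ∈ K, 0 < k ∧ k ≤ m) (hLK : ∀ ℓ ∈ L, ∀ k ∈ K, ℓ < k)
    (hKne : K.Nonempty)
    (hn1 : (t+1)*(t+1) ≤ n) (hn2 : (t+1) + 2*((m+1)^(m+3))*(t+1) ≤ n) (hmn : m ≤ n)
    (IH : ∀ L' K' : Finset ℕ, L'.card = t → (∀ k ∈ K', 0 < k ∧ k ≤ m) →
      (∀ ℓ ∈ L', ∀ k ∈ K', ℓ < k) →
      ∀ F' : Finset (Finset (Fin n)), (∀ A ∈ F', A.card ∈ K') →
      (∀ A ∈ F', ∀ B ∈ F', A ≠ B → (A ∩ B).card ∈ L') → F'.card ≤ n.choose t)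
    (F : Finset (Finset (Fin n))) (hFK : ∀ A ∈ F, A.card ∈ K)
    (hFL : ∀ A ∈ F, ∀ B ∈ F, A ≠ B → (A ∩ B).card ∈ L) :
    F.card ≤ n.choose (t+1) := by
  classical
  have hLne : L.Nonempty := Finset.card_pos.mp (by omega)
  set lam := L.min' hLne with hlamdef
  have hlamL : lam ∈ L := L.min'_mem hLne
  have hlamle : ∀ ℓ ∈ L, lam ≤ ℓ := fun ℓ hℓ => L.min'_le ℓ hℓ
  have hlam1 : 1 ≤ lam := by
    rcases Nat.eq_zero_or_pos lam with h | h
    · exact absurd (h ▸ hlamL) h0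
    · exact h
  obtain ⟨k₀, hk₀⟩ := hKne
  have hlamm : lam < m := lt_of_lt_of_le (hLK lam hlamL k₀ hk₀) (hKm k₀ hk₀).2
  have hm1 : 1 ≤ m := by omega
  have hFm : ∀ A ∈ F, A.card ≤ m := fun A hA => (hKm _ (hFK A hA)).2
  set c0 := (m+1)^(m+3) with hc0
  set X := n.choose t with hX
  have hX1 : 1 ≤ X := Nat.choose_pos (by omega)
  have hfinal : F.card ≤ c0 * (X + 1) → F.card ≤ n.choose (t+1) := by
    intro h
    exact le_trans h (arith2 c0 t n hn2)
  -- growth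
  obtain ⟨D, G, hGF, hD, hDG, hcard⟩ :=
    grow L K hKm hlamL hLK hlamle hlamm hmn F hFK hFL lam le_rfl
  have hmpow : m^lam ≤ (m+1)^m :=
    le_trans (Nat.pow_le_pow_left (by omega) lam) (Nat.pow_le_pow_right (by omega) (by omega))
  -- maximal "exact-D" subfamily
  set P := (G.powerset).filter
    (fun T => ∀ A ∈ T, ∀ B ∈ T, A ≠ B → A ∩ B = D) with hPdef
  have hPne : P.Nonempty := by
    refine ⟨∅, Finset.mem_filter.mpr ⟨Finset.mem_powerset.mpr (Finset.empty_subset G), ?_⟩⟩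
    intro A hA
    exact absurd hA (Finset.notMem_empty A)
  obtain ⟨S₀, hS₀P, hS₀max⟩ := P.exists_max_image Finset.card hPne
  have hS₀G : S₀ ⊆ G := Finset.mem_powerset.mp (Finset.mem_filter.mp hS₀P).1
  have hS₀pair : ∀ A ∈ S₀, ∀ B ∈ S₀, A ≠ B → A ∩ B = D := (Finset.mem_filter.mp hS₀P).2
  by_cases hbig : m+2 ≤ S₀.card
  · -- KERNEL case
    have hn0 : 0 < n := by omega
    have hker : ∀ C ∈ F, D ⊆ C := by
      intro C hC
      set Bad := S₀.filter (fun A => ¬ (C ∩ A ⊆ D)) with hBadDef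
      have hBadcard : Bad.card ≤ m := by
        have hBC : Bad.card ≤ C.card := by
          apply Finset.card_le_card_of_injOn
            (fun A => if h : ((C ∩ A) \ D).Nonempty then h.choose else (⟨0, hn0⟩ : Fin n))
          · intro A hA
            have hA' := Finset.mem_filter.mp hA
            have h : ((C ∩ A) \ D).Nonempty := Finset.sdiff_nonempty.mpr hA'.2
            simp only [dif_pos h]
            have := h.choose_spec
            rw [Finset.mem_sdiff, Finset.mem_inter] at this
            exact this.1.1
          · intro A hA B hB heq
            by_contra hne
            have hA' := Finset.mem_filter.mp (Finset.mem_coe.mp hA)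
            have hB' := Finset.mem_filter.mp (Finset.mem_coe.mp hB)
            have hAne : ((C ∩ A) \ D).Nonempty := Finset.sdiff_nonempty.mpr hA'.2
            have hBne : ((C ∩ B) \ D).Nonempty := Finset.sdiff_nonempty.mpr hB'.2
            simp only [dif_pos hAne, dif_pos hBne] at heq
            have hyA := hAne.choose_spec
            have hyB := hBne.choose_spec
            rw [Finset.mem_sdiff, Finset.mem_inter] at hyA hyB
            rw [heq] at hyA
            have : hBne.choose ∈ A ∩ B := by
              rw [Finset.mem_inter]; exact ⟨hyA.1.2, hyB.1.2⟩
            rw [hS₀pair A hA'.1 B hB'.1 hne] at this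
            exact hyB.2 this
        exact le_trans hBC (hFm C hC)
      set T := S₀.filter (fun A => C ∩ A ⊆ D ∧ A ≠ C) with hTdef
      have hTcard : 1 ≤ T.card := by
        have hsplit := Finset.card_filter_add_card_filter_not
          (s := S₀) (p := fun A => C ∩ A ⊆ D ∧ A ≠ C)
        rw [← hTdef] at hsplit
        have hnegsub : S₀.filter (fun A => ¬(C ∩ A ⊆ D ∧ A ≠ C)) ⊆ insert C Bad := by
          intro A hA
          have hA' := Finset.mem_filter.mp hA
          by_cases hsub : C ∩ A ⊆ D
          · have : A = C := by
              by_contra hne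
              exact hA'.2 ⟨hsub, hne⟩
            exact Finset.mem_insert.mpr (Or.inl this)
          · exact Finset.mem_insert.mpr (Or.inr (Finset.mem_filter.mpr ⟨hA'.1, hsub⟩))
        have hneg : (S₀.filter (fun A => ¬(C ∩ A ⊆ D ∧ A ≠ C))).card ≤ m + 1 := by
          calc (S₀.filter (fun A => ¬(C ∩ A ⊆ D ∧ A ≠ C))).card
              ≤ (insert C Bad).card := Finset.card_le_card hnegsub
          _ ≤ Bad.card + 1 := Finset.card_insert_le C Bad
          _ ≤ m + 1 := by omega
        omega
      obtain ⟨A, hAT⟩ := Finset.card_pos.mp (by omega : 0 < T.card)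
      have hAT' := Finset.mem_filter.mp hAT
      have hAS₀ : A ∈ S₀ := hAT'.1
      have hsub : C ∩ A ⊆ D := hAT'.2.1
      have hAC : A ≠ C := hAT'.2.2
      have hAF : A ∈ F := hGF (hS₀G hAS₀)
      have hCA_L : (C ∩ A).card ∈ L := hFL C hC A hAF (Ne.symm hAC)
      have hlamCA : lam ≤ (C ∩ A).card := hlamle _ hCA_L
      have heq : C ∩ A = D := Finset.eq_of_subset_of_card_le hsub (by omega)
      rw [← heq]
      exact Finset.inter_subset_left
    -- quotient, apply lem0
    set F' := F.image (fun A => A \ D) with hF'def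
    have hinjF : Set.InjOn (fun A : Finset (Fin n) => A \ D) (F : Set (Finset (Fin n))) := by
      intro A hA B hB heq
      have h' : A \ D = B \ D := heq
      have hA' : A \ D ∪ D = A := Finset.sdiff_union_of_subset (hker A (Finset.mem_coe.mp hA))
      have hB' : B \ D ∪ D = B := Finset.sdiff_union_of_subset (hker B (Finset.mem_coe.mp hB))
      rw [← hA', ← hB', h']
    have hcardF' : F'.card = F.card := Finset.card_image_of_injOn hinjF
    set L' := L.image (fun ℓ => ℓ - lam) with hL'def
    set K' := K.image (fun k => k - lam) with hK'def
    have hres : F'.card ≤ n.choose (t+1) := by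
      apply lem0 (m := m) hn1 L' K'
      · have hinjL' : Set.InjOn (fun ℓ => ℓ - lam) (L : Set ℕ) := by
          intro a ha b hb hab
          have ha' := hlamle a (Finset.mem_coe.mp ha)
          have hb' := hlamle b (Finset.mem_coe.mp hb)
          have : a - lam = b - lam := hab
          omega
        rw [hL'def, Finset.card_image_of_injOn hinjL', hLcard]
      · exact Finset.mem_image.mpr ⟨lam, hlamL, by omega⟩
      · intro k' hk'
        obtain ⟨k, hk, rfl⟩ := Finset.mem_image.mp hk'
        have h1 := hLK lam hlamL k hk
        have h2 := (hKm k hk).2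
        omega
      · intro ℓ' hℓ' k' hk'
        obtain ⟨ℓ, hℓ, rfl⟩ := Finset.mem_image.mp hℓ'
        obtain ⟨k, hk, rfl⟩ := Finset.mem_image.mp hk'
        have := hLK ℓ hℓ k hk
        have := hlamle ℓ hℓ
        omega
      · exact IH
      · intro A' hA'
        obtain ⟨A, hA, rfl⟩ := Finset.mem_image.mp hA'
        rw [Finset.card_sdiff_of_subset (hker A hA), hD]
        exact Finset.mem_image.mpr ⟨A.card, hFK A hA, rfl⟩
      · intro A' hA' B' hB' hne
        obtain ⟨A, hA, rfl⟩ := Finset.mem_image.mp hA'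
        obtain ⟨B, hB, rfl⟩ := Finset.mem_image.mp hB'
        have hAB : A ≠ B := by rintro rfl; exact hne rfl
        have hint : (A \ D) ∩ (B \ D) = (A ∩ B) \ D := by
          ext z; simp only [Finset.mem_inter, Finset.mem_sdiff]; tauto
        have hDsub : D ⊆ A ∩ B := Finset.subset_inter (hker A hA) (hker B hB)
        rw [hint, Finset.card_sdiff_of_subset hDsub, hD]
        exact Finset.mem_image.mpr ⟨(A ∩ B).card, hFL A hA B hB hAB, rfl⟩
    omega
  · -- SMALL case
    have hS₀small : S₀.card ≤ m+1 := by omega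
    set W := S₀.biUnion (fun A => A \ D) with hWdef
    have hWcard : W.card ≤ (m+1) * m := by
      calc W.card ≤ ∑ A ∈ S₀, (A \ D).card := Finset.card_biUnion_le
      _ ≤ S₀.card * m := by
          have := Finset.sum_le_card_nsmul S₀ (fun A => (A \ D).card) m
            (fun A hA => le_trans (Finset.card_le_card Finset.sdiff_subset)
              (hFm A (hGF (hS₀G hA))))
          simpa [smul_eq_mul] using this
      _ ≤ (m+1) * m := Nat.mul_le_mul_right _ hS₀small
    have cover2 : G \ S₀ ⊆ W.biUnion (fun y => G.filter (fun C => y ∈ C)) := by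
      intro C hC
      obtain ⟨hCG, hCS₀⟩ := Finset.mem_sdiff.mp hC
      have hex : ∃ A ∈ S₀, C ∩ A ≠ D := by
        by_contra h
        push_neg at h
        have hins : insert C S₀ ∈ P := by
          apply Finset.mem_filter.mpr
          constructor
          · exact Finset.mem_powerset.mpr (Finset.insert_subset hCG hS₀G)
          · intro A hA B hB hAB
            rcases Finset.mem_insert.mp hA with rfl | hA'
            · rcases Finset.mem_insert.mp hB with rfl | hB'
              · exact absurd rfl hAB
              · exact h B hB'
            · rcases Finset.mem_insert.mp hB with rfl | hB'
              · rw [Finset.inter_comm]; exact h A hA'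
              · exact hS₀pair A hA' B hB' hAB
        have hle := hS₀max _ hins
        rw [Finset.card_insert_of_notMem hCS₀] at hle
        omega
      obtain ⟨A, hAS₀, hne⟩ := hex
      have hDsub : D ⊆ C ∩ A := Finset.subset_inter (hDG C hCG) (hDG A (hS₀G hAS₀))
      have hnsub : ¬ (C ∩ A ⊆ D) := fun hsub => hne (Finset.Subset.antisymm hsub hDsub)
      obtain ⟨y, hy⟩ := Finset.sdiff_nonempty.mpr hnsub
      rw [Finset.mem_sdiff, Finset.mem_inter] at hy
      apply Finset.mem_biUnion.mpr
      refine ⟨y, ?_, Finset.mem_filter.mpr ⟨hCG, hy.1.1⟩⟩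
      exact Finset.mem_biUnion.mpr ⟨A, hAS₀, Finset.mem_sdiff.mpr ⟨hy.1.2, hy.2⟩⟩
    by_cases hWne : W.Nonempty
    · obtain ⟨y, hyW, hymax⟩ := W.exists_max_image
        (fun y => (G.filter (fun C => y ∈ C)).card) hWne
      set H := G.filter (fun C => y ∈ C) with hHdef
      have hGbound : G.card ≤ (m+1)*m*H.card + (m+1) := by
        have h2 : (G \ S₀).card ≤ W.card * H.card := by
          calc (G \ S₀).card ≤ (W.biUnion (fun y => G.filter (fun C => y ∈ C))).card :=
              Finset.card_le_card cover2
          _ ≤ ∑ z ∈ W, (G.filter (fun C => z ∈ C)).card := Finset.card_biUnion_le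
          _ ≤ W.card * H.card := by
              have := Finset.sum_le_card_nsmul W
                (fun z => (G.filter (fun C => z ∈ C)).card) (H.card)
                (fun z hz => hymax z hz)
              simpa [smul_eq_mul] using this
        have h3 : (G \ S₀).card = G.card - S₀.card := Finset.card_sdiff_of_subset hS₀G
        have h4 : W.card * H.card ≤ (m+1)*m*H.card := Nat.mul_le_mul_right _ hWcard
        omega
      have hyD : y ∉ D := by
        obtain ⟨A, hA, hy'⟩ := Finset.mem_biUnion.mp hyW
        exact (Finset.mem_sdiff.mp hy').2
      set Dp := insert y D with hDpdef
      have hDpcard : Dp.card = lam + 1 := by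
        rw [hDpdef, Finset.card_insert_of_notMem hyD, hD]
      have hDpC : ∀ C ∈ H, Dp ⊆ C := by
        intro C hC
        have hC' := Finset.mem_filter.mp hC
        exact Finset.insert_subset hC'.2 (hDG C hC'.1)
      set H₂ := H.filter (fun C => lam + 1 < C.card) with hH₂def
      have hH2 : H.card ≤ H₂.card + 1 := by
        have hsplit := Finset.card_filter_add_card_filter_not
          (s := H) (p := fun C => lam + 1 < C.card)
        rw [← hH₂def] at hsplit
        have hnegsub : H.filter (fun C => ¬(lam + 1 < C.card)) ⊆ {Dp} := by
          intro C hC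
          have hC' := Finset.mem_filter.mp hC
          have : Dp = C := Finset.eq_of_subset_of_card_le (hDpC C hC'.1) (by omega)
          exact Finset.mem_singleton.mpr this.symm
        have := Finset.card_le_card hnegsub
        rw [Finset.card_singleton] at this
        omega
      -- quotient of H₂
      set H₂' := H₂.image (fun C => C \ Dp) with hH₂'def
      have hinjH : Set.InjOn (fun C : Finset (Fin n) => C \ Dp)
          (H₂ : Set (Finset (Fin n))) := by
        intro A hA B hB heq
        have h' : A \ Dp = B \ Dp := heq
        have hA' : A \ Dp ∪ Dp = A := Finset.sdiff_union_of_subset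
          (hDpC A (Finset.mem_of_mem_filter A (Finset.mem_coe.mp hA)))
        have hB' : B \ Dp ∪ Dp = B := Finset.sdiff_union_of_subset
          (hDpC B (Finset.mem_of_mem_filter B (Finset.mem_coe.mp hB)))
        rw [← hA', ← hB', h']
      have hcardH : H₂'.card = H₂.card := Finset.card_image_of_injOn hinjH
      set Lp := (L.filter (fun ℓ => lam + 1 ≤ ℓ)).image (fun ℓ => ℓ - (lam+1)) with hLpdef
      set Kp := (K.filter (fun k => lam + 1 < k)).image (fun k => k - (lam+1)) with hKpdef
      have hLfilter : L.filter (fun ℓ => lam + 1 ≤ ℓ) = L.erase lam := by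
        ext ℓ
        simp only [Finset.mem_filter, Finset.mem_erase]
        constructor
        · rintro ⟨h1, h2⟩; exact ⟨by omega, h1⟩
        · rintro ⟨h1, h2⟩
          have := hlamle ℓ h2
          exact ⟨h2, by omega⟩
      have hH₂X : H₂.card ≤ X := by
        rw [← hcardH]
        apply IH Lp Kp
        · have hinjLp : Set.InjOn (fun ℓ => ℓ - (lam+1))
              ((L.filter (fun ℓ => lam + 1 ≤ ℓ)) : Set ℕ) := by
            intro a ha b hb hab
            have ha' := (Finset.mem_filter.mp (Finset.mem_coe.mp ha)).2
            have hb' := (Finset.mem_filter.mp (Finset.mem_coe.mp hb)).2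
            have : a - (lam+1) = b - (lam+1) := hab
            omega
          rw [hLpdef, Finset.card_image_of_injOn hinjLp, hLfilter,
            Finset.card_erase_of_mem hlamL, hLcard]
          omega
        · intro k' hk'
          obtain ⟨k, hk, rfl⟩ := Finset.mem_image.mp hk'
          have hk2 := Finset.mem_filter.mp hk
          have := (hKm k hk2.1).2
          have := hk2.2
          omega
        · intro ℓ' hℓ' k' hk'
          obtain ⟨ℓ, hℓ, rfl⟩ := Finset.mem_image.mp hℓ'
          obtain ⟨k, hk, rfl⟩ := Finset.mem_image.mp hk'
          have hℓ2 := Finset.mem_filter.mp hℓ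
          have hk2 := Finset.mem_filter.mp hk
          have := hLK ℓ hℓ2.1 k hk2.1
          have := hℓ2.2
          omega
        · intro A' hA'
          obtain ⟨A, hA, rfl⟩ := Finset.mem_image.mp hA'
          have hA2 := Finset.mem_filter.mp hA
          have hAH : A ∈ H := hA2.1
          rw [Finset.card_sdiff_of_subset (hDpC A hAH), hDpcard]
          apply Finset.mem_image.mpr
          refine ⟨A.card, Finset.mem_filter.mpr ⟨hFK A (hGF (Finset.mem_of_mem_filter A hAH)), hA2.2⟩, rfl⟩
        · intro A' hA' B' hB' hne
          obtain ⟨A, hA, rfl⟩ := Finset.mem_image.mp hA'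
          obtain ⟨B, hB, rfl⟩ := Finset.mem_image.mp hB'
          have hAB : A ≠ B := by rintro rfl; exact hne rfl
          have hAH : A ∈ H := (Finset.mem_filter.mp hA).1
          have hBH : B ∈ H := (Finset.mem_filter.mp hB).1
          have hAF : A ∈ F := hGF (Finset.mem_of_mem_filter A hAH)
          have hBF : B ∈ F := hGF (Finset.mem_of_mem_filter B hBH)
          have hint : (A \ Dp) ∩ (B \ Dp) = (A ∩ B) \ Dp := by
            ext z; simp only [Finset.mem_inter, Finset.mem_sdiff]; tauto
          have hDsub : Dp ⊆ A ∩ B := Finset.subset_inter (hDpC A hAH) (hDpC B hBH)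
          rw [hint, Finset.card_sdiff_of_subset hDsub, hDpcard]
          apply Finset.mem_image.mpr
          refine ⟨(A ∩ B).card, Finset.mem_filter.mpr ⟨hFL A hAF B hBF hAB, ?_⟩, rfl⟩
          have := Finset.card_le_card hDsub
          omega
      -- assemble
      apply hfinal
      have hHX : H.card ≤ X + 1 := by omega
      have hGX : G.card ≤ (m+1)*m*(X+1) + (m+1) := by
        have := Nat.mul_le_mul_left ((m+1)*m) hHX
        omega
      rw [hc0]
      exact asm1 m lam X F.card G.card H.card hm1 (by omega) hX1 hcard hGX
    · -- W empty
      have hWe : W = ∅ := Finset.not_nonempty_iff_eq_empty.mp hWne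
      have hGS : G \ S₀ = ∅ := by
        apply Finset.eq_empty_of_forall_notMem
        intro C hC
        obtain ⟨z, hz, _⟩ := Finset.mem_biUnion.mp (cover2 hC)
        rw [hWe] at hz
        exact Finset.notMem_empty z hz
      have hGsub : G ⊆ S₀ := by
        intro C hC
        by_contra h
        have : C ∈ G \ S₀ := Finset.mem_sdiff.mpr ⟨hC, h⟩
        rw [hGS] at this
        exact absurd this (Finset.notMem_empty C)
      have hGcard : G.card ≤ m + 1 := le_trans (Finset.card_le_card hGsub) hS₀small
      apply hfinal
      rw [hc0]
      exact asm2 m lam X F.card G.card hm1 (by omega) hX1 hcard (by omega)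

theorem master (m : ℕ) : ∀ t : ℕ, ∃ n₀ : ℕ, ∀ n, n₀ ≤ n → ∀ L K : Finset ℕ,
    L.card = t → (∀ k ∈ K, 0 < k ∧ k ≤ m) → (∀ ℓ ∈ L, ∀ k ∈ K, ℓ < k) →
    ∀ F : Finset (Finset (Fin n)), (∀ A ∈ F, A.card ∈ K) →
    (∀ A ∈ F, ∀ B ∈ F, A ≠ B → (A ∩ B).card ∈ L) → F.card ≤ n.choose t := by
  intro t
  induction t with
  | zero =>
    refine ⟨0, ?_⟩
    intro n _ L K hLcard _ _ F _ hFL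
    have hL : L = ∅ := Finset.card_eq_zero.mp hLcard
    rw [Nat.choose_zero_right]
    apply Finset.card_le_one.mpr
    intro A hA B hB
    by_contra hne
    have := hFL A hA B hB hne
    rw [hL] at this
    exact absurd this (Finset.notMem_empty _)
  | succ t iht =>
    obtain ⟨n₀', hIH⟩ := iht
    refine ⟨n₀' + (t+1)*(t+1) + ((t+1) + 2*((m+1)^(m+3))*(t+1)) + m + 1, ?_⟩
    intro n hn L K hLcard hKm hLK F hFK hFL
    have hIHn : ∀ L' K' : Finset ℕ, L'.card = t → (∀ k ∈ K', 0 < k ∧ k ≤ m) →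
        (∀ ℓ ∈ L', ∀ k ∈ K', ℓ < k) →
        ∀ F' : Finset (Finset (Fin n)), (∀ A ∈ F', A.card ∈ K') →
        (∀ A ∈ F', ∀ B ∈ F', A ≠ B → (A ∩ B).card ∈ L') → F'.card ≤ n.choose t :=
      fun L' K' h1 h2 h3 F' h4 h5 => hIH n (by omega) L' K' h1 h2 h3 F' h4 h5
    by_cases hKne : K.Nonempty
    · by_cases h0 : 0 ∈ L
      · exact lem0 (by omega) L K hLcard h0 hKm hLK hIHn F hFK hFL
      · exact lemPos L K hLcard h0 hKm hLK hKne (by omega) (by omega) (by omega)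
          hIHn F hFK hFL
    · have hFe : F = ∅ := by
        apply Finset.eq_empty_of_forall_notMem
        intro A hA
        exact hKne ⟨A.card, hFK A hA⟩
      rw [hFe, Finset.card_empty]
      exact Nat.zero_le _

theorem stmt_5 (s : ℕ) (L K : Finset ℕ) (hL : L.card = s) (hKne : K.Nonempty)
    (hKpos : ∀ k ∈ K, 0 < k)
    (hLK : ∀ ℓ ∈ L, ∀ k ∈ K, ℓ < k) :
    ∃ n₀ : ℕ, ∀ n ≥ n₀, ∀ F : Finset (Finset (Fin n)),
      (∀ A ∈ F, A.card ∈ K) →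
      (∀ A ∈ F, ∀ B ∈ F, A ≠ B → (A ∩ B).card ∈ L) →
      F.card ≤ n.choose s := by
  obtain ⟨n₀, h⟩ := master (K.max' hKne) s
  refine ⟨n₀, fun n hn F h1 h2 => ?_⟩
  exact h n hn L K hL (fun k hk => ⟨hKpos k hk, K.le_max' k hk⟩) hLK F h1 h2
end

section
/- Let F be an intersecting family of (k+1)-element subsets of [n]. Then the number of k-element subsets of [n] that are contained in at least one member of F is at least |F|. -/
open Finset
open scoped FinsetFamily

namespace KatonaAux

variable {n k : ℕ}

/-- The window: first `m` elements of `Fin n`. -/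
def W (n m : ℕ) : Finset (Fin n) := Finset.univ.filter (fun x => (x : ℕ) < m)

@[simp] lemma mem_W {m : ℕ} {x : Fin n} : x ∈ W n m ↔ (x : ℕ) < m := by
  simp [W]

lemma W_mono {m m' : ℕ} (h : m ≤ m') : W n m ⊆ W n m' := fun x hx => by
  simp only [mem_W] at *; omega

lemma card_W (m : ℕ) : #(W n m) = min m n := by
  classical
  have : (W n m).image Fin.val = Finset.range (min m n) := by
    ext v
    simp only [mem_image, mem_W, Finset.mem_range, lt_min_iff]
    constructor
    · rintro ⟨x, hx, rfl⟩; exact ⟨hx, x.isLt⟩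
    · rintro ⟨h1, h2⟩; exact ⟨⟨v, h2⟩, h1, rfl⟩
  have h2 := congrArg Finset.card this
  rwa [card_image_of_injective _ Fin.val_injective, Finset.card_range] at h2

lemma card_W_of_le {m : ℕ} (h : m ≤ n) : #(W n m) = m := by
  rw [card_W]; omega

/-- A family is shifted if it is invariant under all elementary compressions. -/
def Shifted (F : Finset (Finset (Fin n))) : Prop :=
  ∀ i j : Fin n, i < j → 𝓒 ({i} : Finset (Fin n)) {j} F = F

def IntFam (F : Finset (Finset (Fin n))) : Prop :=
  ∀ A ∈ F, ∀ B ∈ F, (A ∩ B).Nonempty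

lemma compress_singleton {i j : Fin n} {A : Finset (Fin n)} (hj : j ∈ A) (hi : i ∉ A) :
    UV.compress ({i} : Finset (Fin n)) {j} A = insert i (A.erase j) := by
  classical
  rw [UV.compress, if_pos ⟨by simpa using hi, by simpa using hj⟩]
  ext x
  simp only [sup_eq_union, mem_sdiff, mem_union, mem_singleton, mem_insert, mem_erase]
  constructor
  · rintro ⟨h1 | h1, h2⟩
    · exact Or.inr ⟨h2, h1⟩
    · exact Or.inl h1
  · rintro (rfl | ⟨h1, h2⟩)
    · exact ⟨Or.inr rfl, fun h => hi (by rw [h]; exact hj)⟩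
    · exact ⟨Or.inl h2, h1⟩

lemma shift_mem {F : Finset (Finset (Fin n))} (hF : Shifted F) {A : Finset (Fin n)}
    (hA : A ∈ F) {p q : Fin n} (hq : q ∈ A) (hp : p ∉ A) (hpq : p < q) :
    insert p (A.erase q) ∈ F := by
  classical
  have := UV.compress_mem_compression (u := ({p} : Finset (Fin n))) (v := {q}) hA
  rwa [hF p q hpq, compress_singleton hq hp] at this


section Compress
variable {F : Finset (Finset (Fin n))} {i j : Fin n}

lemma mem_of_compression_not_orig (hij : i ≠ j) {X : Finset (Fin n)}
    (hX : X ∈ 𝓒 ({i} : Finset (Fin n)) {j} F) (hX' : X ∉ F) :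
    i ∈ X ∧ j ∉ X ∧ insert j (X.erase i) ∈ F := by
  classical
  have h1 : ({i} : Finset (Fin n)) ≤ X := UV.le_of_mem_compression_of_notMem hX hX'
  have h2 : Disjoint ({j} : Finset (Fin n)) X :=
    UV.disjoint_of_mem_compression_of_notMem hX hX'
  have h3 : (X ⊔ ({j} : Finset (Fin n))) \ {i} ∈ F :=
    UV.sup_sdiff_mem_of_mem_compression_of_notMem hX hX'
  have hiX : i ∈ X := by simpa using h1
  have hjX : j ∉ X := by simpa [disjoint_left] using h2
  refine ⟨hiX, hjX, ?_⟩
  have : (X ⊔ ({j} : Finset (Fin n))) \ {i} = insert j (X.erase i) := by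
    ext x
    simp only [sup_eq_union, mem_sdiff, mem_union, mem_singleton, mem_insert, mem_erase]
    constructor
    · rintro ⟨h1 | h1, h2⟩
      · exact Or.inr ⟨h2, h1⟩
      · exact Or.inl h1
    · rintro (rfl | ⟨h1, h2⟩)
      · exact ⟨Or.inr rfl, fun h => hjX (h ▸ hiX)⟩
      · exact ⟨Or.inl h2, h1⟩
  rwa [this] at h3

lemma intfam_compression (hij : i ≠ j) (hF : IntFam F) :
    IntFam (𝓒 ({i} : Finset (Fin n)) {j} F) := by
  classical
  -- helper : X ∈ F (and compress X ∈ F), Y moved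
  have helper : ∀ X ∈ F, UV.compress ({i} : Finset (Fin n)) {j} X ∈ F →
      ∀ Y ∈ 𝓒 ({i} : Finset (Fin n)) {j} F, Y ∉ F → (X ∩ Y).Nonempty := by
    intro X hXF hXc Y hYc hYF
    obtain ⟨hiY, hjY, hY0⟩ := mem_of_compression_not_orig hij hYc hYF
    by_contra hempty
    rw [not_nonempty_iff_eq_empty, ← Finset.disjoint_iff_inter_eq_empty] at hempty
    have hXY0 := hF X hXF _ hY0
    obtain ⟨x, hx⟩ := hXY0
    rw [mem_inter, mem_insert, mem_erase] at hx
    have hxX := hx.1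
    have hxj : x = j := by
      rcases hx.2 with rfl | ⟨hxi, hxY⟩
      · rfl
      · exact absurd (Finset.disjoint_left.1 hempty hxX) (by simp [hxY])
    have hjX2 : j ∈ X := hxj ▸ hx.1
    have hiX : i ∉ X := fun hiX => by
      have := Finset.disjoint_left.1 hempty hiX; exact this hiY
    have hXc' : insert i (X.erase j) ∈ F := by
      rwa [compress_singleton hjX2 hiX] at hXc
    have := hF _ hXc' _ hY0
    obtain ⟨z, hz⟩ := this
    rw [mem_inter, mem_insert, mem_erase, mem_insert, mem_erase] at hz
    obtain ⟨hz1, hz2⟩ := hz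
    rcases hz1 with rfl | ⟨hz1a, hz1b⟩
    · rcases hz2 with rfl | ⟨h, _⟩
      · exact hij rfl
      · exact h rfl
    · rcases hz2 with rfl | ⟨hz2a, hz2b⟩
      · exact hz1a rfl
      · exact (Finset.disjoint_left.1 hempty hz1b) hz2b
  intro X hX Y hY
  classical
  by_cases hXF : X ∈ F <;> by_cases hYF : Y ∈ F
  · exact hF X hXF Y hYF
  · have hXc : UV.compress ({i} : Finset (Fin n)) {j} X ∈ F := by
      rcases UV.mem_compression.1 hX with ⟨_, h⟩ | ⟨h, _⟩
      · exact h
      · exact absurd hXF h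
    exact helper X hXF hXc Y hY hYF
  · have hYc : UV.compress ({i} : Finset (Fin n)) {j} Y ∈ F := by
      rcases UV.mem_compression.1 hY with ⟨_, h⟩ | ⟨h, _⟩
      · exact h
      · exact absurd hYF h
    obtain ⟨z, hz⟩ := helper Y hYF hYc X hX hXF
    exact ⟨z, by rw [mem_inter] at hz ⊢; exact ⟨hz.2, hz.1⟩⟩
  · obtain ⟨hiX, -, -⟩ := mem_of_compression_not_orig hij hX hXF
    obtain ⟨hiY, -, -⟩ := mem_of_compression_not_orig hij hY hYF
    exact ⟨i, mem_inter.2 ⟨hiX, hiY⟩⟩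

lemma uniform_compression (hu : ∀ A ∈ F, #A = k + 1) :
    ∀ A ∈ 𝓒 ({i} : Finset (Fin n)) {j} F, #A = k + 1 := by
  classical
  intro A hA
  rcases UV.mem_compression.1 hA with ⟨h, -⟩ | ⟨-, b, hb, rfl⟩
  · exact hu A h
  · rw [UV.card_compress (by simp)]
    exact hu b hb

/-- measure used for termination of the shifting process -/
def fmeasure (F : Finset (Finset (Fin n))) : ℕ := ∑ A ∈ F, ∑ x ∈ A, (x : ℕ)

lemma fmeasure_compression_lt (hij : i < j)
    (hne : 𝓒 ({i} : Finset (Fin n)) {j} F ≠ F) :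
    fmeasure (𝓒 ({i} : Finset (Fin n)) {j} F) < fmeasure F := by
  classical
  set u : Finset (Fin n) := {i}
  set v : Finset (Fin n) := {j}
  have q : ∀ Q ∈ {A ∈ F | UV.compress u v A ∉ F}, UV.compress u v Q ≠ Q := by
    simp_rw [mem_filter]
    intro Q hQ h
    rw [h] at hQ
    exact hQ.2 hQ.1
  have uA : {A ∈ F | UV.compress u v A ∈ F} ∪ {A ∈ F | UV.compress u v A ∉ F} = F :=
    filter_union_filter_not_eq _ _
  have ne₂ : {A ∈ F | UV.compress u v A ∉ F}.Nonempty := by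
    refine nonempty_iff_ne_empty.2 fun z => hne ?_
    rw [UV.compression, filter_image, z, image_empty, union_empty]
    rwa [z, union_empty] at uA
  rw [fmeasure, fmeasure, UV.compression, sum_union UV.compress_disjoint]
  conv_rhs => rw [← uA]
  rw [sum_union (disjoint_filter_filter_not _ _ _), add_lt_add_iff_left, filter_image,
    sum_image UV.compress_injOn]
  refine sum_lt_sum_of_nonempty ne₂ fun A hA => ?_
  have hQ := q _ hA
  rw [mem_filter] at hA
  -- compress A ≠ A means the if fired: j ∈ A, i ∉ A
  have hcond : Disjoint u A ∧ v ≤ A := by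
    by_contra h
    exact hQ (by rw [UV.compress, if_neg h])
  have hiA : i ∉ A := by simpa [u, disjoint_left] using hcond.1
  have hjA : j ∈ A := by simpa [v] using hcond.2
  rw [compress_singleton hjA hiA]
  rw [sum_insert (fun h => hiA (mem_of_mem_erase h))]
  have h1 : ∑ x ∈ A.erase j, (x : ℕ) + (j : ℕ) = ∑ x ∈ A, (x : ℕ) := by
    rw [add_comm, Finset.add_sum_erase _ _ hjA]
  omega

end Compress


section Reduce
open scoped Classical in
lemma exists_shifted (F : Finset (Finset (Fin n))) (hu : ∀ A ∈ F, #A = k + 1)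
    (hi : IntFam F) :
    ∃ G : Finset (Finset (Fin n)), #G = #F ∧ (∀ A ∈ G, #A = k + 1) ∧ IntFam G ∧
      Shifted G ∧ #(∂ G) ≤ #(∂ F) := by
  classical
  by_cases hsh : Shifted F
  · exact ⟨F, rfl, hu, hi, hsh, le_rfl⟩
  · rw [Shifted] at hsh
    push_neg at hsh
    obtain ⟨i, j, hij, hne⟩ := hsh
    have hmeas := fmeasure_compression_lt hij hne
    set F' := 𝓒 ({i} : Finset (Fin n)) {j} F with hF'
    obtain ⟨G, hG1, hG2, hG3, hG4, hG5⟩ :=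
      exists_shifted F' (uniform_compression hu) (intfam_compression hij.ne hi)
    refine ⟨G, ?_, hG2, hG3, hG4, ?_⟩
    · rw [hG1, hF', UV.card_compression]
    · refine hG5.trans ?_
      refine UV.card_shadow_compression_le _ _ fun x hx => ⟨j, by simp, ?_⟩
      simp only [mem_singleton] at hx
      subst hx
      simp only [Finset.erase_singleton]
      exact UV.isCompressed_self _ _
termination_by fmeasure F
decreasing_by exact hmeas

end Reduce


section ShiftedCore
variable {F : Finset (Finset (Fin n))}

lemma move_disjoint (hF : Shifted F) :
    ∀ (m : ℕ) (A D : Finset (Fin n)), A ∈ F → #(A ∩ D) ≤ m →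
      (∀ x ∈ A ∩ D, #(A ∩ W n (x : ℕ)) + #(D ∩ W n (x : ℕ)) < (x : ℕ)) →
      ∃ B ∈ F, Disjoint B D := by
  classical
  intro m
  induction m with
  | zero =>
    intro A D hA hcard _
    refine ⟨A, hA, ?_⟩
    rw [Nat.le_zero, Finset.card_eq_zero, ← Finset.disjoint_iff_inter_eq_empty] at hcard
    exact hcard
  | succ m ih =>
    intro A D hA hcard hinv
    rcases (A ∩ D).eq_empty_or_nonempty with hemp | hne
    · exact ⟨A, hA, Finset.disjoint_iff_inter_eq_empty.2 hemp⟩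
    · set a := (A ∩ D).min' hne with ha_def
      have ha : a ∈ A ∩ D := Finset.min'_mem _ hne
      have haA : a ∈ A := (mem_inter.1 ha).1
      have haD : a ∈ D := (mem_inter.1 ha).2
      have hxa := hinv a ha
      -- find a spare element c below a
      have hKcard : #(W n (a : ℕ)) = (a : ℕ) := card_W_of_le a.isLt.le
      have hsubcard : #((A ∪ D) ∩ W n (a : ℕ)) < #(W n (a : ℕ)) := by
        rw [Finset.union_inter_distrib_right]
        calc #((A ∩ W n (a : ℕ)) ∪ (D ∩ W n (a : ℕ)))
            ≤ #(A ∩ W n (a : ℕ)) + #(D ∩ W n (a : ℕ)) := card_union_le _ _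
          _ < (a : ℕ) := hxa
          _ = #(W n (a : ℕ)) := hKcard.symm
      have hnotsub : ¬ (W n (a : ℕ) ⊆ (A ∪ D) ∩ W n (a : ℕ)) := fun h =>
        absurd (card_le_card h) (not_le.2 hsubcard)
      obtain ⟨c, hcW, hc⟩ := Finset.not_subset.1 hnotsub
      have hcAD : c ∉ A ∪ D := fun h => hc (mem_inter.2 ⟨h, hcW⟩)
      have hcA : c ∉ A := fun h => hcAD (mem_union_left _ h)
      have hcD : c ∉ D := fun h => hcAD (mem_union_right _ h)
      have hca : c < a := by
        rw [Fin.lt_def]; exact mem_W.1 hcW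
      have hA' : insert c (A.erase a) ∈ F := shift_mem hF hA haA hcA hca
      set A' := insert c (A.erase a) with hA'def
      have hint : A' ∩ D = (A ∩ D).erase a := by
        ext x
        simp only [hA'def, mem_inter, mem_insert, mem_erase]
        constructor
        · rintro ⟨rfl | ⟨hxa', hxA⟩, hxD⟩
          · exact absurd hxD hcD
          · exact ⟨hxa', hxA, hxD⟩
        · rintro ⟨hxa', hxA, hxD⟩
          exact ⟨Or.inr ⟨hxa', hxA⟩, hxD⟩
      refine ih A' D hA' ?_ ?_
      · rw [hint, card_erase_of_mem ha]
        omega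
      · intro x hx
        rw [hint, mem_erase] at hx
        obtain ⟨hxa', hxAD⟩ := hx
        have hax : a < x := lt_of_le_of_ne (Finset.min'_le _ _ hxAD) (Ne.symm hxa')
        have haxv : (a : ℕ) < (x : ℕ) := hax
        have hkey : A' ∩ W n (x : ℕ) = insert c ((A ∩ W n (x : ℕ)).erase a) := by
          ext z
          simp only [hA'def, mem_inter, mem_insert, mem_erase, mem_W]
          constructor
          · rintro ⟨rfl | ⟨hza, hzA⟩, hzW⟩
            · exact Or.inl rfl
            · exact Or.inr ⟨hza, hzA, hzW⟩
          · rintro (rfl | ⟨hza, hzA, hzW⟩)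
            · exact ⟨Or.inl rfl, by omega⟩
            · exact ⟨Or.inr ⟨hza, hzA⟩, hzW⟩
        have haW : a ∈ A ∩ W n (x : ℕ) := mem_inter.2 ⟨haA, mem_W.2 haxv⟩
        have hcnotin : c ∉ (A ∩ W n (x : ℕ)).erase a := fun h =>
          hcA (mem_inter.1 (mem_of_mem_erase h)).1
        have hcardeq : #(A' ∩ W n (x : ℕ)) = #(A ∩ W n (x : ℕ)) := by
          rw [hkey, card_insert_of_notMem hcnotin, card_erase_of_mem haW]
          have : 1 ≤ #(A ∩ W n (x : ℕ)) := Finset.card_pos.2 ⟨a, haW⟩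
          omega
        rw [hcardeq]
        exact hinv x hxAD

lemma exists_good_i (hF : Shifted F) (hint : IntFam F) {A : Finset (Fin n)} (hA : A ∈ F) :
    ∃ i : ℕ, i + 1 ≤ #(A ∩ W n (2 * i + 1)) := by
  classical
  by_contra h
  push_neg at h
  have hinv : ∀ x ∈ A ∩ A, #(A ∩ W n (x : ℕ)) + #(A ∩ W n (x : ℕ)) < (x : ℕ) := by
    intro x hx
    have hx' : x ∈ A := (mem_inter.1 hx).1
    set c := #(A ∩ W n (x : ℕ)) with hc
    by_contra hcon
    push_neg at hcon
    have hsub : insert x (A ∩ W n (x : ℕ)) ⊆ A ∩ W n (2 * c + 1) := by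
      intro z hz
      rcases mem_insert.1 hz with rfl | hz'
      · exact mem_inter.2 ⟨hx', mem_W.2 (by omega)⟩
      · obtain ⟨hzA, hzW⟩ := mem_inter.1 hz'
        exact mem_inter.2 ⟨hzA, mem_W.2 (by have := mem_W.1 hzW; omega)⟩
      
    have hxnot : x ∉ A ∩ W n (x : ℕ) := fun hmem => by
      have := mem_W.1 (mem_inter.1 hmem).2; omega
    have hcard : c + 1 ≤ #(A ∩ W n (2 * c + 1)) := by
      have h2 := card_le_card hsub
      rwa [card_insert_of_notMem hxnot] at h2
    have h3 := h c
    omega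
  obtain ⟨B, hB, hdisj⟩ := move_disjoint hF (#(A ∩ A)) A A hA le_rfl hinv
  obtain ⟨z, hz⟩ := hint A hA B hB
  rw [mem_inter] at hz
  exact (Finset.disjoint_left.1 hdisj hz.2) hz.1

lemma fill (hF : Shifted F) :
    ∀ (m : ℕ) (A S P : Finset (Fin n)), A ∈ F → #S ≤ m → Disjoint S A → P ⊆ A →
      (∀ s ∈ S, #({t ∈ S | s ≤ t}) ≤ #({x ∈ A \ P | s < x})) →
      ∃ B ∈ F, S ⊆ B ∧ P ⊆ B := by
  classical
  intro m
  induction m with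
  | zero =>
    intro A S P hA hcard _ hPA _
    rw [Nat.le_zero, Finset.card_eq_zero] at hcard
    exact ⟨A, hA, by simp [hcard], hPA⟩
  | succ m ih =>
    intro A S P hA hcard hSA hPA hinv
    rcases S.eq_empty_or_nonempty with hemp | hne
    · exact ⟨A, hA, by simp [hemp], hPA⟩
    set b := S.max' hne with hb_def
    have hbS : b ∈ S := S.max'_mem hne
    have h1 : 1 ≤ #({t ∈ S | b ≤ t}) := Finset.card_pos.2 ⟨b, mem_filter.2 ⟨hbS, le_refl _⟩⟩
    have h2 := hinv b hbS
    have h3 : ({x ∈ A \ P | b < x}).Nonempty := Finset.card_pos.1 (by omega)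
    obtain ⟨a, ha⟩ := h3
    rw [mem_filter, mem_sdiff] at ha
    obtain ⟨⟨haA, haP⟩, hba⟩ := ha
    have hbA : b ∉ A := Finset.disjoint_left.1 hSA hbS
    have hA' : insert b (A.erase a) ∈ F := shift_mem hF hA haA hbA hba
    set A' := insert b (A.erase a) with hA'def
    set S' := S.erase b with hS'def
    set P' := insert b P with hP'def
    have hP'A' : P' ⊆ A' := by
      intro p hp
      rcases mem_insert.1 hp with rfl | hp'
      · exact mem_insert_self _ _
      · exact mem_insert_of_mem (mem_erase.2 ⟨fun h => haP (h ▸ hp'), hPA hp'⟩)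
    have hS'A' : Disjoint S' A' := by
      rw [Finset.disjoint_left]
      intro x hx hx'
      have hxb : x ≠ b := (mem_erase.1 hx).1
      have hxS : x ∈ S := mem_of_mem_erase hx
      rcases mem_insert.1 hx' with rfl | hx''
      · exact hxb rfl
      · exact (Finset.disjoint_left.1 hSA hxS) (mem_of_mem_erase hx'')
    have hcard' : #S' ≤ m := by
      rw [hS'def, card_erase_of_mem hbS]
      omega
    have hinv' : ∀ s ∈ S', #({t ∈ S' | s ≤ t}) ≤ #({x ∈ A' \ P' | s < x}) := by
      intro s hs
      have hsS : s ∈ S := mem_of_mem_erase hs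
      have hsb : s ≠ b := (mem_erase.1 hs).1
      have hsb' : s < b := lt_of_le_of_ne (S.le_max' s hsS) hsb
      have eq1 : ({t ∈ S' | s ≤ t}) = ({t ∈ S | s ≤ t}).erase b := by
        ext t
        simp only [hS'def, mem_filter, mem_erase]
        tauto
      have eq2 : A' \ P' = (A \ P).erase a := by
        ext x
        simp only [hA'def, hP'def, mem_sdiff, mem_insert, mem_erase, not_or]
        constructor
        · rintro ⟨rfl | ⟨hxa, hxA⟩, hxb, hxP⟩
          · exact absurd rfl hxb
          · exact ⟨hxa, hxA, hxP⟩
        · rintro ⟨hxa, hxA, hxP⟩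
          exact ⟨Or.inr ⟨hxa, hxA⟩, fun h => hbA (h ▸ hxA), hxP⟩
      have eq3 : ({x ∈ A' \ P' | s < x}) = ({x ∈ A \ P | s < x}).erase a := by
        rw [eq2, Finset.filter_erase]
      have hbmem : b ∈ ({t ∈ S | s ≤ t}) := mem_filter.2 ⟨hbS, hsb'.le⟩
      have hamem : a ∈ ({x ∈ A \ P | s < x}) :=
        mem_filter.2 ⟨mem_sdiff.2 ⟨haA, haP⟩, hsb'.trans hba⟩
      rw [eq1, eq3, card_erase_of_mem hbmem, card_erase_of_mem hamem]
      have := hinv s hsS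
      have l1 : 1 ≤ #({t ∈ S | s ≤ t}) := Finset.card_pos.2 ⟨b, hbmem⟩
      have l2 : 1 ≤ #({x ∈ A \ P | s < x}) := Finset.card_pos.2 ⟨a, hamem⟩
      omega
    obtain ⟨B, hB, hS'B, hP'B⟩ := ih A' S' P' hA' hcard' hS'A' hP'A' hinv'
    refine ⟨B, hB, ?_, fun p hp => hP'B (mem_insert_of_mem hp)⟩
    intro x hx
    by_cases hxb : x = b
    · exact hP'B (hxb ▸ mem_insert_self _ _)
    · exact hS'B (mem_erase.2 ⟨hxb, hx⟩)

end ShiftedCore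


section Main
variable {F : Finset (Finset (Fin n))}

open scoped Classical in
/-- minimal index `i` such that `#(A ∩ W n (2i+1)) ≥ i + 1`, if it exists. -/
noncomputable def goodIdx (A : Finset (Fin n)) : ℕ :=
  if h : ∃ i : ℕ, i + 1 ≤ #(A ∩ W n (2 * i + 1)) then Nat.find h else 0

lemma goodIdx_spec {A : Finset (Fin n)} (h : ∃ i : ℕ, i + 1 ≤ #(A ∩ W n (2 * i + 1))) :
    goodIdx A + 1 ≤ #(A ∩ W n (2 * goodIdx A + 1)) ∧
      ∀ j < goodIdx A, #(A ∩ W n (2 * j + 1)) ≤ j := by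
  simp only [goodIdx]
  rw [dif_pos h]
  refine ⟨Nat.find_spec h, fun j hj => ?_⟩
  have := Nat.find_min h hj
  omega

lemma window_union_bound (A : Finset (Fin n)) {m m' : ℕ} (h : m ≤ m') :
    #(A ∩ W n m') ≤ #(A ∩ W n m) + (min m' n - min m n) := by
  classical
  have hsub : A ∩ W n m' ⊆ (A ∩ W n m) ∪ (W n m' \ W n m) := by
    intro z hz
    obtain ⟨hzA, hzW⟩ := mem_inter.1 hz
    by_cases hzm : z ∈ W n m
    · exact mem_union_left _ (mem_inter.2 ⟨hzA, hzm⟩)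
    · exact mem_union_right _ (mem_sdiff.2 ⟨hzW, hzm⟩)
  have h1 := card_le_card hsub
  have h2 := card_union_le (A ∩ W n m) (W n m' \ W n m)
  have h3 := Finset.card_sdiff_add_card_eq_card (W_mono (n := n) h)
  have e1 := card_W (n := n) m
  have e2 := card_W (n := n) m'
  omega

lemma goodIdx_card {A : Finset (Fin n)} (h : ∃ i : ℕ, i + 1 ≤ #(A ∩ W n (2 * i + 1))) :
    #(A ∩ W n (2 * goodIdx A + 1)) = goodIdx A + 1 ∧ 2 * goodIdx A + 1 ≤ n := by
  obtain ⟨hspec, hmin⟩ := goodIdx_spec h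
  set i := goodIdx A with hi
  rcases Nat.eq_zero_or_pos i with hzero | hpos
  · rw [hzero] at hspec ⊢
    have hspec' : 1 ≤ #(A ∩ W n 1) := hspec
    have h1 : #(A ∩ W n 1) ≤ #(W n 1) := card_le_card (inter_subset_right)
    have h2 := card_W (n := n) 1
    show #(A ∩ W n 1) = 1 ∧ 1 ≤ n
    constructor <;> omega
  · obtain ⟨j, hj⟩ : ∃ j, i = j + 1 := ⟨i - 1, by omega⟩
    have hminj := hmin j (by omega)
    have hb := window_union_bound A (n := n) (m := 2 * j + 1) (m' := 2 * i + 1) (by omega)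
    have e1 := card_W (n := n) (2 * j + 1)
    have e2 := card_W (n := n) (2 * i + 1)
    constructor <;> omega

lemma claim_c {A : Finset (Fin n)} (h : ∃ i : ℕ, i + 1 ≤ #(A ∩ W n (2 * i + 1)))
    {v : ℕ} (hv : v ≤ 2 * goodIdx A) : 2 * #(A ∩ W n v) ≤ v + 1 := by
  obtain ⟨hspec, hmin⟩ := goodIdx_spec h
  obtain ⟨hm, hn⟩ := goodIdx_card h
  obtain ⟨i, hi⟩ : ∃ i, goodIdx A = i := ⟨_, rfl⟩
  rw [hi] at hspec hmin hm hn hv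
  by_contra hcon
  push_neg at hcon
  obtain ⟨c, hc⟩ : ∃ c, #(A ∩ W n v) = c := ⟨_, rfl⟩
  rw [hc] at hcon
  have hc1 : 1 ≤ c := by omega
  have hsub : A ∩ W n v ⊆ A ∩ W n (2 * (c - 1) + 1) :=
    inter_subset_inter le_rfl (W_mono (by omega))
  have hle : c ≤ #(A ∩ W n (2 * (c - 1) + 1)) := by
    have h2 := card_le_card hsub
    rw [hc] at h2
    exact h2
  rcases lt_or_ge (c - 1) i with hci | hci
  · have := hmin (c - 1) hci
    omega
  · have hsub2 : A ∩ W n v ⊆ A ∩ W n (2 * i + 1) :=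
      inter_subset_inter le_rfl (W_mono (by omega))
    have hle2 : c ≤ i + 1 := by
      have h2 := card_le_card hsub2
      omega
    have hceq : c = i + 1 := by omega
    have hipos : 1 ≤ i := by
      rcases Nat.eq_zero_or_pos i with h0 | h1
      · exfalso
        have hWv : W n v = (∅ : Finset (Fin n)) := by
          ext z; simp only [mem_W, Finset.notMem_empty, iff_false]
          omega
        rw [hWv] at hc
        simp at hc
        omega
      · exact h1
    have hmono : c ≤ #(A ∩ W n (2 * i)) := by
      have hs : A ∩ W n v ⊆ A ∩ W n (2 * i) :=
        inter_subset_inter le_rfl (W_mono (by omega))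
      have h2 := card_le_card hs
      omega
    have hminj := hmin (i - 1) (by omega)
    have hb := window_union_bound A (n := n) (m := 2 * (i - 1) + 1) (m' := 2 * i) (by omega)
    have e1 := card_W (n := n) (2 * (i - 1) + 1)
    have e2 := card_W (n := n) (2 * i)
    omega

/-- The Katona map. -/
noncomputable def katF (A : Finset (Fin n)) : Finset (Fin n) :=
  (W n (2 * goodIdx A + 1) \ A) ∪ (A \ W n (2 * goodIdx A + 1))

lemma katF_inter_window {A : Finset (Fin n)} :
    katF A ∩ W n (2 * goodIdx A + 1) = W n (2 * goodIdx A + 1) \ A := by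
  ext z
  simp only [katF, mem_inter, mem_union, mem_sdiff]
  tauto

lemma katF_card {A : Finset (Fin n)} (h : ∃ i : ℕ, i + 1 ≤ #(A ∩ W n (2 * i + 1)))
    (hcard : #A = k + 1) : #(katF A) = k := by
  classical
  obtain ⟨hm, hn⟩ := goodIdx_card h
  set i := goodIdx A with hi
  have hWcard : #(W n (2 * i + 1)) = 2 * i + 1 := card_W_of_le hn
  have e1 : #(W n (2 * i + 1) ∩ A) + #(W n (2 * i + 1) \ A) = #(W n (2 * i + 1)) :=
    Finset.card_inter_add_card_sdiff _ _
  have e2 : #(A ∩ W n (2 * i + 1)) + #(A \ W n (2 * i + 1)) = #A :=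
    Finset.card_inter_add_card_sdiff _ _
  have e3 : #(W n (2 * i + 1) ∩ A) = #(A ∩ W n (2 * i + 1)) := by rw [inter_comm]
  have hd : Disjoint (W n (2 * i + 1) \ A) (A \ W n (2 * i + 1)) := by
    rw [Finset.disjoint_left]
    intro x hx hx'
    exact (mem_sdiff.1 hx).2 (mem_sdiff.1 hx').1
  rw [katF, ← hi, card_union_of_disjoint hd]
  have hik : i ≤ k := by
    have : #(A ∩ W n (2 * i + 1)) ≤ #A := card_le_card inter_subset_left
    omega
  omega

lemma katF_subset {A : Finset (Fin n)} (hF : Shifted F) (hA : A ∈ F)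
    (h : ∃ i : ℕ, i + 1 ≤ #(A ∩ W n (2 * i + 1))) :
    ∃ B ∈ F, katF A ⊆ B := by
  classical
  obtain ⟨hm, hn⟩ := goodIdx_card h
  have hcl0 := fun (v : ℕ) (hv : v ≤ 2 * goodIdx A) => claim_c h hv
  obtain ⟨i, hi⟩ : ∃ i, goodIdx A = i := ⟨_, rfl⟩
  rw [hi] at hm hn hcl0
  have hAP : A \ (A \ W n (2 * i + 1)) = A ∩ W n (2 * i + 1) :=
    Finset.sdiff_sdiff_self_left A _
  have hinv : ∀ s ∈ W n (2 * i + 1) \ A,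
      #({t ∈ W n (2 * i + 1) \ A | s ≤ t}) ≤
      #({x ∈ A \ (A \ W n (2 * i + 1)) | s < x}) := by
    intro s hs
    obtain ⟨hsW, hsA⟩ := mem_sdiff.1 hs
    have hv2i : (s : ℕ) < 2 * i + 1 := mem_W.1 hsW
    have hcl := hcl0 (s : ℕ) (by omega)
    have eqL : ({t ∈ W n (2 * i + 1) \ A | s ≤ t}) =
        (W n (2 * i + 1) \ A) \ W n (s : ℕ) := by
      ext t
      simp only [mem_filter, mem_sdiff, mem_W, Fin.le_def]
      constructor
      · rintro ⟨⟨h1, h2⟩, h3⟩; exact ⟨⟨h1, h2⟩, by omega⟩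
      · rintro ⟨⟨h1, h2⟩, h3⟩; exact ⟨⟨h1, h2⟩, by omega⟩
    have eqR : ({x ∈ A \ (A \ W n (2 * i + 1)) | s < x}) =
        (A ∩ W n (2 * i + 1)) \ W n (s : ℕ) := by
      rw [hAP]
      ext x
      simp only [mem_filter, mem_inter, mem_sdiff, mem_W, Fin.lt_def]
      constructor
      · rintro ⟨⟨h1, h2⟩, h3⟩; exact ⟨⟨h1, h2⟩, by omega⟩
      · rintro ⟨⟨h1, h2⟩, h3⟩
        refine ⟨⟨h1, h2⟩, ?_⟩
        rcases Nat.lt_or_ge (s : ℕ) (x : ℕ) with hlt | hge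
        · exact hlt
        · exfalso
          have : x = s := Fin.ext (by omega)
          exact hsA (this ▸ h1)
    have c1 : #((W n (2 * i + 1) \ A) ∩ W n (s : ℕ)) +
        #((W n (2 * i + 1) \ A) \ W n (s : ℕ)) = #(W n (2 * i + 1) \ A) :=
      Finset.card_inter_add_card_sdiff _ _
    have c2 : #((A ∩ W n (2 * i + 1)) ∩ W n (s : ℕ)) +
        #((A ∩ W n (2 * i + 1)) \ W n (s : ℕ)) = #(A ∩ W n (2 * i + 1)) :=
      Finset.card_inter_add_card_sdiff _ _
    have eqB : (W n (2 * i + 1) \ A) ∩ W n (s : ℕ) = W n (s : ℕ) \ A := by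
      ext t
      simp only [mem_inter, mem_sdiff, mem_W]
      constructor
      · rintro ⟨⟨h1, h2⟩, h3⟩; exact ⟨h3, h2⟩
      · rintro ⟨h1, h2⟩; exact ⟨⟨by omega, h2⟩, h1⟩
    have eqD : (A ∩ W n (2 * i + 1)) ∩ W n (s : ℕ) = A ∩ W n (s : ℕ) := by
      ext t
      simp only [mem_inter, mem_W]
      constructor
      · rintro ⟨⟨h1, h2⟩, h3⟩; exact ⟨h1, h3⟩
      · rintro ⟨h1, h3⟩; exact ⟨⟨h1, by omega⟩, h3⟩
    have c3 : #(W n (s : ℕ) \ A) + #(W n (s : ℕ) ∩ A) = #(W n (s : ℕ)) :=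
      Finset.card_sdiff_add_card_inter _ _
    have c4 : #(W n (s : ℕ)) = (s : ℕ) := card_W_of_le (by omega)
    have c5 : #(W n (s : ℕ) ∩ A) = #(A ∩ W n (s : ℕ)) := by rw [inter_comm]
    have c6 : #(W n (2 * i + 1) ∩ A) + #(W n (2 * i + 1) \ A) = #(W n (2 * i + 1)) :=
      Finset.card_inter_add_card_sdiff _ _
    have c7 : #(W n (2 * i + 1) ∩ A) = #(A ∩ W n (2 * i + 1)) := by rw [inter_comm]
    have hWcard : #(W n (2 * i + 1)) = 2 * i + 1 := card_W_of_le hn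
    rw [eqL, eqR]
    rw [eqB] at c1
    rw [eqD] at c2
    omega
  obtain ⟨B, hB, h1, h2⟩ := fill hF (#(W n (2 * i + 1) \ A)) A (W n (2 * i + 1) \ A)
    (A \ W n (2 * i + 1)) hA le_rfl sdiff_disjoint sdiff_subset hinv
  refine ⟨B, hB, ?_⟩
  have : katF A = (W n (2 * i + 1) \ A) ∪ (A \ W n (2 * i + 1)) := by
    rw [katF, hi]
  rw [this]
  exact union_subset h1 h2

lemma katF_inj {A A' : Finset (Fin n)}
    (h : ∃ i : ℕ, i + 1 ≤ #(A ∩ W n (2 * i + 1)))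
    (h' : ∃ i : ℕ, i + 1 ≤ #(A' ∩ W n (2 * i + 1)))
    (heq : katF A = katF A') : A = A' := by
  classical
  have key : ∀ (X Y : Finset (Fin n)),
      (∃ i : ℕ, i + 1 ≤ #(X ∩ W n (2 * i + 1))) →
      (∃ i : ℕ, i + 1 ≤ #(Y ∩ W n (2 * i + 1))) →
      katF X = katF Y → goodIdx X ≤ goodIdx Y → goodIdx Y ≤ goodIdx X := by
    intro X Y hX hY hXY hle
    by_contra hlt
    push_neg at hlt
    obtain ⟨hmX, hnX⟩ := goodIdx_card hX
    obtain ⟨-, hminY⟩ := goodIdx_spec hY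
    obtain ⟨i, hiX⟩ : ∃ i, goodIdx X = i := ⟨_, rfl⟩
    obtain ⟨i', hiY⟩ : ∃ i', goodIdx Y = i' := ⟨_, rfl⟩
    rw [hiX] at hmX hnX hle hlt
    rw [hiY] at hminY hle hlt
    have hWcard : #(W n (2 * i + 1)) = 2 * i + 1 := card_W_of_le hnX
    have e1 : katF X ∩ W n (2 * i + 1) = W n (2 * i + 1) \ X := by
      have := katF_inter_window (A := X)
      rwa [hiX] at this
    have e2 : katF Y ∩ W n (2 * i + 1) = W n (2 * i + 1) \ Y := by
      ext z
      simp only [katF, hiY, mem_inter, mem_union, mem_sdiff, mem_W]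
      constructor
      · rintro ⟨hz1 | hz1, hz2⟩
        · exact ⟨hz2, hz1.2⟩
        · exfalso; obtain ⟨-, hz3⟩ := hz1; exact hz3 (by omega)
      · rintro ⟨hz1, hz2⟩
        exact ⟨Or.inl ⟨by omega, hz2⟩, hz1⟩
    have eWW : W n (2 * i + 1) \ X = W n (2 * i + 1) \ Y := by rw [← e1, ← e2, hXY]
    have c1 : #(W n (2 * i + 1) ∩ X) + #(W n (2 * i + 1) \ X) = #(W n (2 * i + 1)) :=
      Finset.card_inter_add_card_sdiff _ _
    have c2 : #(W n (2 * i + 1) ∩ Y) + #(W n (2 * i + 1) \ Y) = #(W n (2 * i + 1)) :=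
      Finset.card_inter_add_card_sdiff _ _
    have c3 : #(W n (2 * i + 1) ∩ X) = #(X ∩ W n (2 * i + 1)) := by rw [inter_comm]
    have c4 : #(W n (2 * i + 1) ∩ Y) = #(Y ∩ W n (2 * i + 1)) := by rw [inter_comm]
    have hmY := hminY i hlt
    rw [eWW] at c1
    omega
  have hidx : goodIdx A = goodIdx A' := by
    rcases le_total (goodIdx A) (goodIdx A') with hle | hle
    · exact le_antisymm hle (key A A' h h' heq hle)
    · exact (le_antisymm hle (key A' A h' h heq.symm hle)).symm
  have e1 : katF A ∩ W n (2 * goodIdx A + 1) = W n (2 * goodIdx A + 1) \ A :=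
    katF_inter_window
  have e2 := katF_inter_window (A := A')
  rw [← hidx] at e2
  have eWW : W n (2 * goodIdx A + 1) \ A = W n (2 * goodIdx A + 1) \ A' := by
    rw [← e1, ← e2, heq]
  have hkat := Finset.ext_iff.1 heq
  have hWW := Finset.ext_iff.1 eWW
  ext x
  have h1 := hWW x
  have h2 := hkat x
  simp only [katF] at h2
  rw [← hidx] at h2
  simp only [mem_union, mem_sdiff] at h1 h2
  by_cases hx : x ∈ W n (2 * goodIdx A + 1) <;> simp only [mem_sdiff, hx] at h1 h2 <;> tauto

lemma card_le_target (hF : Shifted F) (hint : IntFam F) (hu : ∀ A ∈ F, #A = k + 1) :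
    F.card ≤ #((Finset.powersetCard k (Finset.univ : Finset (Fin n))).filter
      (fun T => ∃ A ∈ F, T ⊆ A)) := by
  classical
  apply card_le_card_of_injOn katF
  · intro A hA
    have h := exists_good_i hF hint hA
    rw [mem_coe, mem_filter, mem_powersetCard]
    obtain ⟨B, hB, hsub⟩ := katF_subset hF hA h
    exact ⟨⟨subset_univ _, katF_card h (hu A hA)⟩, B, hB, hsub⟩
  · intro A hA A' hA' heq
    exact katF_inj (exists_good_i hF hint hA) (exists_good_i hF hint hA') heq

lemma filter_eq_shadow (H : Finset (Finset (Fin n))) (hu : ∀ A ∈ H, #A = k + 1) :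
    (Finset.powersetCard k (Finset.univ : Finset (Fin n))).filter
      (fun T => ∃ A ∈ H, T ⊆ A) = ∂ H := by
  classical
  ext T
  rw [mem_filter, mem_powersetCard, mem_shadow_iff_exists_sdiff]
  constructor
  · rintro ⟨⟨-, hT⟩, A, hA, hTA⟩
    refine ⟨A, hA, hTA, ?_⟩
    have h1 := card_sdiff_of_subset hTA
    have h2 := hu A hA
    omega
  · rintro ⟨A, hA, hTA, hAT⟩
    have h1 := card_sdiff_of_subset hTA
    have h2 := hu A hA
    have h3 := card_le_card hTA
    exact ⟨⟨subset_univ _, by omega⟩, A, hA, hTA⟩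

end Main

end KatonaAux

theorem stmt_6 (n k : ℕ) (F : Finset (Finset (Fin n)))
    (huniform : ∀ A ∈ F, A.card = k + 1)
    (hint : ∀ A ∈ F, ∀ B ∈ F, (A ∩ B).Nonempty) :
    F.card ≤ ((Finset.powersetCard k (Finset.univ : Finset (Fin n))).filter
      (fun T => ∃ A ∈ F, T ⊆ A)).card := by
  classical
  obtain ⟨G, hG1, hG2, hG3, hG4, hG5⟩ := KatonaAux.exists_shifted F huniform hint
  have h1 := KatonaAux.card_le_target hG4 hG3 hG2
  rw [KatonaAux.filter_eq_shadow G hG2] at h1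
  rw [KatonaAux.filter_eq_shadow F huniform]
  omega
end

section
/- Let n, t, k be positive integers with k < t ≤ (k+n)/2, and let F ⊆ 2^[n] be a family of rank t with |A \ B| ≤ k for all A, B ∈ F. If F is not trivially (t−k)-intersecting, then |F| ≤ ∑_{i=0}^{k} C(n, i) − C(n−t−2k, k). -/
/-!
Kleitman's argument: if `|A \ B| ≤ k` for all members of `𝒜`, then `𝒜` has at most as many members
as there are sets of size `≤ k` lying below a member of `𝒜`. Induct on the ground set: for a
point `a`, the union `𝒢` of the `a`-free members and the `a`-links again has all differences
`≤ k`, their intersection `ℋ` has all differences `≤ k - 1`, `|𝒜| = |𝒢| + |ℋ|`, and putting `a`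
back into the small sets below `ℋ` gives small sets below `𝒜` that are new.

For the theorem fix a member `A` of maximal size `t`, so `|C \ A| ≤ |A \ C| ≤ k` for all `C ∈ F`.
Take `B₁` with `|A \ B₁| = k`; non-triviality gives `B₂` with `A \ B₂ ⊄ A \ B₁`, and every
`C \ A` of full size `k` meets `W = (B₁ ∪ B₂) \ A`. A `k`-set below a member of `F` avoiding
`A ∪ W` would be such a `C \ A`, so none of the at least `C(n - t - 2k, k)` many `k`-subsets of
the complement of `A ∪ W` lies below a member of `F`.
-/

open Finset

section

variable {α : Type*} [DecidableEq α]

def truncDownClosure (k : ℕ) (𝒜 : Finset (Finset α)) : Finset (Finset α) :=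
  {s ∈ 𝒜.biUnion powerset | #s ≤ k}

variable {k : ℕ} {a : α} {𝒜 ℬ : Finset (Finset α)} {s : Finset α}

lemma mem_truncDownClosure : s ∈ truncDownClosure k 𝒜 ↔ #s ≤ k ∧ ∃ A ∈ 𝒜, s ⊆ A := by
  simp [truncDownClosure, and_comm]

lemma truncDownClosure_mono (h : ∀ B ∈ ℬ, ∃ A ∈ 𝒜, B ⊆ A) :
    truncDownClosure k ℬ ⊆ truncDownClosure k 𝒜 := by
  intro s hs
  obtain ⟨hsk, B, hB, hsB⟩ := mem_truncDownClosure.1 hs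
  obtain ⟨A, hA, hBA⟩ := h B hB
  exact mem_truncDownClosure.2 ⟨hsk, A, hA, hsB.trans hBA⟩

lemma notMem_of_mem_truncDownClosure (h : ∀ A ∈ 𝒜, a ∉ A) (hs : s ∈ truncDownClosure k 𝒜) :
    a ∉ s := by
  obtain ⟨-, A, hA, hsA⟩ := mem_truncDownClosure.1 hs
  exact fun has => h A hA (hsA has)

lemma exists_mem_subset_subset_insert_of_mem_union_subfamily
    (hs : s ∈ 𝒜.nonMemberSubfamily a ∪ 𝒜.memberSubfamily a) :
    ∃ A ∈ 𝒜, s ⊆ A ∧ A ⊆ insert a s := by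
  rcases mem_union.1 hs with hs | hs
  · exact ⟨s, (mem_nonMemberSubfamily.1 hs).1, subset_rfl, subset_insert _ _⟩
  · exact ⟨insert a s, (mem_memberSubfamily.1 hs).1, subset_insert _ _, subset_rfl⟩

lemma notMem_of_mem_union_subfamily (hs : s ∈ 𝒜.nonMemberSubfamily a ∪ 𝒜.memberSubfamily a) :
    a ∉ s := by
  rcases mem_union.1 hs with hs | hs
  exacts [(mem_nonMemberSubfamily.1 hs).2, (mem_memberSubfamily.1 hs).2]

lemma card_sdiff_le_of_mem_union_subfamily (h𝒜 : ∀ A ∈ 𝒜, ∀ B ∈ 𝒜, #(A \ B) ≤ k)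
    {s t : Finset α} (hs : s ∈ 𝒜.nonMemberSubfamily a ∪ 𝒜.memberSubfamily a)
    (ht : t ∈ 𝒜.nonMemberSubfamily a ∪ 𝒜.memberSubfamily a) : #(s \ t) ≤ k := by
  obtain ⟨A, hA, hsA, -⟩ := exists_mem_subset_subset_insert_of_mem_union_subfamily hs
  obtain ⟨B, hB, -, hBt⟩ := exists_mem_subset_subset_insert_of_mem_union_subfamily ht
  have has := notMem_of_mem_union_subfamily hs
  refine (card_le_card fun x hx => ?_).trans (h𝒜 A hA B hB)
  obtain ⟨hxs, hxt⟩ := mem_sdiff.1 hx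
  refine mem_sdiff.2 ⟨hsA hxs, fun hxB => ?_⟩
  rcases mem_insert.1 (hBt hxB) with rfl | hxt'
  exacts [has hxs, hxt hxt']

lemma card_sdiff_add_one_le_of_mem_inter_subfamily (h𝒜 : ∀ A ∈ 𝒜, ∀ B ∈ 𝒜, #(A \ B) ≤ k)
    {s t : Finset α} (hs : s ∈ 𝒜.nonMemberSubfamily a ∩ 𝒜.memberSubfamily a)
    (ht : t ∈ 𝒜.nonMemberSubfamily a ∩ 𝒜.memberSubfamily a) : #(s \ t) + 1 ≤ k := by
  obtain ⟨-, hs⟩ := mem_inter.1 hs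
  obtain ⟨ht, -⟩ := mem_inter.1 ht
  rw [mem_memberSubfamily] at hs
  rw [mem_nonMemberSubfamily] at ht
  have has : a ∉ s \ t := fun h => hs.2 (mem_sdiff.1 h).1
  calc #(s \ t) + 1 = #(insert a s \ t) := by
        rw [insert_sdiff_of_notMem _ ht.2, card_insert_of_notMem has]
    _ ≤ k := h𝒜 _ hs.1 _ ht.1

lemma image_insert_truncDownClosure_subset (h𝒜 : ∀ A ∈ 𝒜, ∀ B ∈ 𝒜, #(A \ B) ≤ k) :
    (truncDownClosure (k - 1) (𝒜.nonMemberSubfamily a ∩ 𝒜.memberSubfamily a)).image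
      (insert a) ⊆ truncDownClosure k 𝒜 := by
  simp only [subset_iff, mem_image, forall_exists_index, and_imp, forall_apply_eq_imp_iff₂]
  intro s hs
  obtain ⟨hsk, B, hB, hsB⟩ := mem_truncDownClosure.1 hs
  -- `1 ≤ k` as soon as `ℋ` is nonempty, so the truncated `k - 1` does no harm.
  have hk := card_sdiff_add_one_le_of_mem_inter_subfamily h𝒜 hB hB
  have hB𝒜 := (mem_memberSubfamily.1 (mem_inter.1 hB).2).1
  exact mem_truncDownClosure.2
    ⟨(card_insert_le _ _).trans (by omega), _, hB𝒜, insert_subset_insert _ hsB⟩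

lemma card_le_card_truncDownClosure_of_forall_subset (u : Finset α) (hu : ∀ A ∈ 𝒜, A ⊆ u)
    (h𝒜 : ∀ A ∈ 𝒜, ∀ B ∈ 𝒜, #(A \ B) ≤ k) : #𝒜 ≤ #(truncDownClosure k 𝒜) := by
  induction u using Finset.induction generalizing k 𝒜 with
  | empty =>
    refine card_le_card fun A hA => mem_truncDownClosure.2 ⟨?_, A, hA, subset_rfl⟩
    simp [subset_empty.1 (hu A hA)]
  | insert a u _ ih =>
    set 𝒢 := 𝒜.nonMemberSubfamily a ∪ 𝒜.memberSubfamily a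
    set ℋ := 𝒜.nonMemberSubfamily a ∩ 𝒜.memberSubfamily a
    have h𝒢u : ∀ s ∈ 𝒢, s ⊆ u := by
      intro s hs
      obtain ⟨A, hA, hsA, -⟩ := exists_mem_subset_subset_insert_of_mem_union_subfamily hs
      exact (subset_insert_iff_of_notMem (notMem_of_mem_union_subfamily hs)).1
        (hsA.trans (hu A hA))
    have hℋ𝒢 : ℋ ⊆ 𝒢 := inter_subset_left.trans subset_union_left
    have h𝒢 := ih h𝒢u fun s hs t ht => card_sdiff_le_of_mem_union_subfamily h𝒜 hs ht
    have hℋ := ih (k := k - 1) (fun s hs => h𝒢u s (hℋ𝒢 hs)) fun s hs t ht => by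
      have := card_sdiff_add_one_le_of_mem_inter_subfamily h𝒜 hs ht
      omega
    have ha𝒢 : ∀ s ∈ 𝒢, a ∉ s := fun s => notMem_of_mem_union_subfamily
    have haℋ : ∀ s ∈ ℋ, a ∉ s := fun s hs => ha𝒢 s (hℋ𝒢 hs)
    have hdisj : Disjoint (truncDownClosure k 𝒢)
        ((truncDownClosure (k - 1) ℋ).image (insert a)) := by
      refine disjoint_left.2 fun s hs hs' => notMem_of_mem_truncDownClosure ha𝒢 hs ?_
      obtain ⟨t, -, rfl⟩ := mem_image.1 hs'
      exact mem_insert_self a t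
    have hinj : #((truncDownClosure (k - 1) ℋ).image (insert a)) =
        #(truncDownClosure (k - 1) ℋ) := by
      refine card_image_of_injOn fun s hs t ht hst => ?_
      rw [← erase_insert (notMem_of_mem_truncDownClosure haℋ hs),
        ← erase_insert (notMem_of_mem_truncDownClosure haℋ ht)]
      exact congrArg (erase · a) hst
    calc #𝒜 = #𝒢 + #ℋ := by
          rw [card_union_add_card_inter, ← card_memberSubfamily_add_card_nonMemberSubfamily,
            add_comm]
      _ ≤ #(truncDownClosure k 𝒢 ∪ (truncDownClosure (k - 1) ℋ).image (insert a)) := by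
          rw [card_union_of_disjoint hdisj, hinj]; omega
      _ ≤ #(truncDownClosure k 𝒜) := card_le_card (union_subset
          (truncDownClosure_mono fun s hs => ?_) (image_insert_truncDownClosure_subset h𝒜))
    obtain ⟨A, hA, hsA, -⟩ := exists_mem_subset_subset_insert_of_mem_union_subfamily hs
    exact ⟨A, hA, hsA⟩

theorem card_le_card_truncDownClosure (h𝒜 : ∀ A ∈ 𝒜, ∀ B ∈ 𝒜, #(A \ B) ≤ k) :
    #𝒜 ≤ #(truncDownClosure k 𝒜) :=
  card_le_card_truncDownClosure_of_forall_subset (𝒜.sup id) (fun _ => le_sup (f := id)) h𝒜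

end

lemma card_filter_card_le {α : Type*} [Fintype α] (k : ℕ) :
    #{s : Finset α | #s ≤ k} = ∑ i ∈ range (k + 1), (Fintype.card α).choose i := by
  have hcard : ∀ s ∈ ({s : Finset α | #s ≤ k} : Finset _), #s ∈ range (k + 1) :=
    fun s hs => by simpa [Nat.lt_succ_iff] using hs
  rw [card_eq_sum_card_fiberwise hcard]
  refine sum_congr rfl fun i hi => ?_
  rw [← card_univ, ← card_powersetCard, powersetCard_eq_filter, powerset_univ, filter_filter]
  congr 1
  ext s
  simp only [mem_filter, mem_univ, true_and, and_iff_right_iff_imp]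
  rintro rfl
  simpa [Nat.lt_succ_iff] using hi

section

variable {α : Type*} [DecidableEq α] {k : ℕ} {F : Finset (Finset α)} {A B C W Z : Finset α}

lemma not_disjoint_sdiff_sdiff_of_card_sdiff_le (hCB : #(C \ B) ≤ #(C \ A)) {x : α}
    (hxA : x ∈ A) (hxC : x ∈ C) (hxB : x ∉ B) : ¬ Disjoint (C \ A) (B \ A) := by
  intro hdisj
  have hsub : C \ A ⊂ C \ B := by
    refine (ssubset_iff_of_subset fun y hy => ?_).2
      ⟨x, mem_sdiff.2 ⟨hxC, hxB⟩, fun h => (mem_sdiff.1 h).2 hxA⟩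
    obtain ⟨hyC, hyA⟩ := mem_sdiff.1 hy
    exact mem_sdiff.2 ⟨hyC, fun hyB => disjoint_left.1 hdisj hy (mem_sdiff.2 ⟨hyB, hyA⟩)⟩
  exact (card_lt_card hsub).not_ge hCB

lemma exists_hitting_set_of_not_trivially_intersecting (hA : A ∈ F) (hmax : ∀ B ∈ F, #B ≤ #A)
    (hF : ∀ B ∈ F, ∀ C ∈ F, #(B \ C) ≤ k)
    (hntriv : ¬ ∃ S : Finset α, #S = #A - k ∧ ∀ B ∈ F, S ⊆ B) :
    ∃ W : Finset α, #W ≤ 2 * k ∧ ∀ C ∈ F, #(C \ A) = k → ¬ Disjoint (C \ A) W := by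
  have hsymm : ∀ C ∈ F, #(C \ A) = k → #(A \ C) = k := fun C hC hCk => by
    have := card_sdiff_le_card_sdiff_iff.2 (hmax C hC)
    have := hF A hA C hC
    omega
  by_cases hex : ∃ B₁ ∈ F, #(A \ B₁) = k
  swap
  · exact ⟨∅, by simp, fun C hC hCk => absurd ⟨C, hC, hsymm C hC hCk⟩ hex⟩
  obtain ⟨B₁, hB₁, hB₁k⟩ := hex
  obtain ⟨B₂, hB₂, hB₂B₁⟩ : ∃ B₂ ∈ F, ¬ A \ B₂ ⊆ A \ B₁ := by
    by_contra! hall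
    refine hntriv ⟨A ∩ B₁, ?_, fun B hB x hx => ?_⟩
    · have := card_sdiff_add_card_inter A B₁
      omega
    · obtain ⟨hxA, hxB₁⟩ := mem_inter.1 hx
      by_contra hxB
      exact (mem_sdiff.1 (hall B hB (mem_sdiff.2 ⟨hxA, hxB⟩))).2 hxB₁
  have hmeet : ∀ B ∈ F, ∀ C ∈ F, #(C \ A) = k → ¬ A \ B ⊆ A \ C →
      ¬ Disjoint (C \ A) (B \ A) := fun B hB C hC hCk hBC => by
    obtain ⟨x, hxAB, hxAC⟩ := not_subset.1 hBC
    obtain ⟨hxA, hxB⟩ := mem_sdiff.1 hxAB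
    exact not_disjoint_sdiff_sdiff_of_card_sdiff_le (hCk ▸ hF C hC B hB) hxA
      (by simpa [hxA] using hxAC) hxB
  refine ⟨(B₁ \ A) ∪ (B₂ \ A), (card_union_le _ _).trans ?_, fun C hC hCk => ?_⟩
  · have := hF B₁ hB₁ A hA
    have := hF B₂ hB₂ A hA
    omega
  rw [disjoint_union_right, not_and_or]
  -- `A \ C` has size `k`, like `A \ B₁`, so it cannot contain both `A \ B₁` and `A \ B₂`.
  by_cases hB₁C : A \ B₁ ⊆ A \ C
  · have heq : A \ B₁ = A \ C := eq_of_subset_of_card_le hB₁C (by rw [hsymm C hC hCk, hB₁k])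
    exact Or.inr (hmeet B₂ hB₂ C hC hCk (heq ▸ hB₂B₁))
  · exact Or.inl (hmeet B₁ hB₁ C hC hCk hB₁C)

lemma disjoint_truncDownClosure_powersetCard (hF : ∀ C ∈ F, #(C \ A) ≤ k)
    (hW : ∀ C ∈ F, #(C \ A) = k → ¬ Disjoint (C \ A) W) (hZ : Disjoint Z (A ∪ W)) :
    Disjoint (truncDownClosure k F) (powersetCard k Z) := by
  refine disjoint_left.2 fun I hI hIZ => ?_
  obtain ⟨-, C, hC, hIC⟩ := mem_truncDownClosure.1 hI
  obtain ⟨hIZ, hIk⟩ := mem_powersetCard.1 hIZ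
  rw [disjoint_union_right] at hZ
  have hICA : I ⊆ C \ A := subset_sdiff.2 ⟨hIC, hZ.1.mono_left hIZ⟩
  have hI : I = C \ A := eq_of_subset_of_card_le hICA (hIk ▸ hF C hC)
  exact hW C hC (hI ▸ hIk) (hI ▸ hZ.2.mono_left hIZ)

end

theorem stmt_11_general (n t k : ℕ)
    (F : Finset (Finset (Fin n)))
    (hrank : (∀ A ∈ F, A.card ≤ t) ∧ ∃ A ∈ F, A.card = t)
    (hdiff : ∀ A ∈ F, ∀ B ∈ F, (A \ B).card ≤ k)
    (htriv : ¬ ∃ A : Finset (Fin n), A.card = t - k ∧ ∀ B ∈ F, A ⊆ B) :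
    F.card ≤ ∑ i ∈ Finset.range (k + 1), n.choose i - (n - t - 2 * k).choose k := by
  obtain ⟨hle, A, hA, rfl⟩ := hrank
  obtain ⟨W, hW, hAW⟩ := exists_hitting_set_of_not_trivially_intersecting hA hle hdiff htriv
  have hZ : n - #A - 2 * k ≤ #(A ∪ W)ᶜ := by
    have := card_union_le A W
    rw [card_compl, Fintype.card_fin]
    omega
  have hdisj := disjoint_truncDownClosure_powersetCard (fun C hC => hdiff C hC A hA) hAW
    disjoint_compl_left
  have hball : truncDownClosure k F ∪ powersetCard k (A ∪ W)ᶜ ⊆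
      ({s | #s ≤ k} : Finset (Finset (Fin n))) := by
    refine union_subset (fun s hs => ?_) fun s hs => ?_
    · simpa using (mem_truncDownClosure.1 hs).1
    · simpa using (mem_powersetCard.1 hs).2.le
  have hcount := card_le_card hball
  rw [card_union_of_disjoint hdisj, card_powersetCard, card_filter_card_le,
    Fintype.card_fin] at hcount
  have := card_le_card_truncDownClosure hdiff
  have := Nat.choose_le_choose k hZ
  omega

theorem stmt_11 (n t k : ℕ) (hk : 0 < k) (hkt : k < t) (htn : 2 * t ≤ k + n)
    (F : Finset (Finset (Fin n)))
    (hrank : (∀ A ∈ F, A.card ≤ t) ∧ ∃ A ∈ F, A.card = t)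
    (hdiff : ∀ A ∈ F, ∀ B ∈ F, (A \ B).card ≤ k)
    (htriv : ¬ ∃ A : Finset (Fin n), A.card = t - k ∧ ∀ B ∈ F, A ⊆ B) :
    F.card ≤ ∑ i ∈ Finset.range (k + 1), n.choose i - (n - t - 2 * k).choose k :=
  stmt_11_general n t k F hrank hdiff htriv
end

section
/- Let L be a set of s non-negative integers with L ≠ {0, 1, ..., s−1}, 0 ∈ L, n ≥ 3s², and let F ⊆ 2^[n] be an L-intersecting Sperner family. Then for every x ∈ [n], the subfamily F_x = {F ∈ F : x ∈ F} satisfies |F_x| ≤ ∑_{i=0}^{s-1} C(n−1, i). -/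
/-!
Fix `x` and pass to the link `G = {A \ {x} : x ∈ A ∈ F}`, a family on the `n - 1` points other
than `x`. Every pairwise intersection in `G` has size `ℓ - 1` for some nonzero `ℓ ∈ L`, so at most
`s - 1` sizes occur, and by the Sperner property it is strictly smaller than both sets. For
`A ∈ G` the function `S ↦ ∏ (|A ∩ S| - ℓ)`, over the occurring sizes `ℓ < |A|`, vanishes at every
other member of `G` but not at `A`; these functions are therefore linearly independent. Each is a
combination of the indicators `S ↦ [T ⊆ S]` with `|T| ≤ s - 1`, and there are
`∑_{i < s} C(n - 1, i)` of those.
-/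

open Finset

namespace IntersectingFamily

variable {α : Type*} [DecidableEq α]

def subsetIndicator (T : Finset α) : Finset α → ℚ := fun S => if T ⊆ S then 1 else 0

def indicatorSpan (A : Finset α) (d : ℕ) : Submodule ℚ (Finset α → ℚ) :=
  Submodule.span ℚ (subsetIndicator '' {T | T ⊆ A ∧ #T ≤ d})

/-- When `T ⊆ S`, `|A ∩ S| - |T|` counts the `i ∈ A \ T` with `insert i T ⊆ S`. -/
lemma card_inter_sub_mul_subsetIndicator {A T : Finset α} (hT : T ⊆ A) (l : ℚ) (S : Finset α) :
    ((#(A ∩ S) : ℚ) - l) * subsetIndicator T S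
      = ∑ i ∈ A \ T, subsetIndicator (insert i T) S + ((#T : ℚ) - l) * subsetIndicator T S := by
  by_cases hTS : T ⊆ S
  · have hind : ∀ i ∈ A \ T, subsetIndicator (insert i T) S = if i ∈ S then 1 else 0 := by
      intro i _
      simp only [subsetIndicator, insert_subset_iff, hTS, and_true]
    have hsdiff : (A \ T) ∩ S = (A ∩ S) \ T := by
      ext i; simp only [mem_inter, mem_sdiff]; tauto
    have hTAS : T ⊆ A ∩ S := subset_inter hT hTS
    rw [sum_congr rfl hind, sum_ite_mem, sum_const, hsdiff, card_sdiff_of_subset hTAS,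
      nsmul_eq_mul, Nat.cast_sub (card_le_card hTAS)]
    simp only [subsetIndicator, if_pos hTS]
    ring
  · have hind : ∀ i ∈ A \ T, subsetIndicator (insert i T) S = 0 := fun i _ =>
      if_neg fun h => hTS ((subset_insert i T).trans h)
    rw [sum_congr rfl hind]
    simp [subsetIndicator, hTS]

lemma mul_card_inter_sub_mem_indicatorSpan {A : Finset α} {d : ℕ} (l : ℚ)
    {g : Finset α → ℚ} (hg : g ∈ indicatorSpan A d) :
    (fun S => (#(A ∩ S) : ℚ) - l) * g ∈ indicatorSpan A (d + 1) := by
  suffices indicatorSpan A d ≤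
      (indicatorSpan A (d + 1)).comap (LinearMap.mulLeft ℚ fun S => (#(A ∩ S) : ℚ) - l) from
    this hg
  refine Submodule.span_le.mpr ?_
  rintro _ ⟨T, ⟨hTA, hTd⟩, rfl⟩
  have hprod : (fun S => (#(A ∩ S) : ℚ) - l) * subsetIndicator T
      = ∑ i ∈ A \ T, subsetIndicator (insert i T) + ((#T : ℚ) - l) • subsetIndicator T := by
    ext S
    simpa using card_inter_sub_mul_subsetIndicator hTA l S
  simp only [SetLike.mem_coe, Submodule.mem_comap, LinearMap.mulLeft_apply, hprod]
  refine add_mem (sum_mem fun i hi => Submodule.subset_span ⟨insert i T, ⟨?_, ?_⟩, rfl⟩)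
    (Submodule.smul_mem _ _ (Submodule.subset_span ⟨T, ⟨hTA, by omega⟩, rfl⟩))
  · exact insert_subset (mem_sdiff.mp hi).1 hTA
  · exact (card_insert_le i T).trans (by omega)

lemma prod_card_inter_sub_mem_indicatorSpan (A : Finset α) (m : Finset ℕ) :
    ∏ l ∈ m, (fun S => (#(A ∩ S) : ℚ) - l) ∈ indicatorSpan A #m := by
  induction m using Finset.induction with
  | empty =>
    have hone : (1 : Finset α → ℚ) = subsetIndicator ∅ := by
      ext S; simp [subsetIndicator]
    rw [prod_empty, hone]
    exact Submodule.subset_span ⟨∅, ⟨empty_subset A, by simp⟩, rfl⟩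
  | insert l m hl ih =>
    rw [prod_insert hl, card_insert_of_notMem hl]
    exact mul_card_inter_sub_mem_indicatorSpan l ih

/-- The nonuniform Ray-Chaudhuri–Wilson (Frankl–Wilson) bound. -/
theorem card_le_sum_choose_of_inter_card_mem {U : Finset α} {G : Finset (Finset α)}
    {M : Finset ℕ} (hGU : ∀ A ∈ G, A ⊆ U)
    (hGM : ∀ A ∈ G, ∀ B ∈ G, A ≠ B → #(A ∩ B) ∈ M ∧ #(A ∩ B) < #A) :
    #G ≤ ∑ i ∈ range (#M + 1), (#U).choose i := by
  classical
  set v : G → Finset α → ℚ := fun A => ∏ l ∈ M.filter (· < #(A : Finset α)),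
    fun S => (#((A : Finset α) ∩ S) : ℚ) - l
  have hdiag : ∀ A : G, v A A ≠ 0 := by
    intro A
    simp only [v, prod_apply, inter_self]
    refine prod_ne_zero_iff.mpr fun l hl => sub_ne_zero.mpr ?_
    exact_mod_cast ((mem_filter.mp hl).2).ne'
  have hoff : Pairwise fun A B : G => v B A = 0 := by
    intro A B hAB
    have hBA := hGM B B.2 A A.2 (Subtype.coe_ne_coe.mpr (Ne.symm hAB))
    simp only [v, prod_apply]
    exact prod_eq_zero (mem_filter.mpr hBA) (sub_self _)
  have hli : LinearIndependent ℚ v :=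
    .of_pairwise_dual_eq_zero_one v (fun A => (v A A)⁻¹ • LinearMap.proj (A : Finset α))
      (fun A B hAB => by simp [hoff hAB]) (fun A => inv_mul_cancel₀ (hdiag A))
  set 𝒯 := (range (#M + 1)).biUnion fun i => U.powersetCard i
  have hspan : Set.range v ≤ Submodule.span ℚ (𝒯.image subsetIndicator : Set (Finset α → ℚ)) := by
    rintro _ ⟨A, rfl⟩
    refine Submodule.span_mono ?_ (prod_card_inter_sub_mem_indicatorSpan (A : Finset α) _)
    rintro _ ⟨T, ⟨hTA, hTc⟩, rfl⟩
    refine mem_image_of_mem _ (mem_biUnion.mpr ⟨#T, mem_range.mpr ?_, ?_⟩)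
    · exact Nat.lt_succ_of_le (hTc.trans (card_filter_le _ _))
    · exact mem_powersetCard.mpr ⟨hTA.trans (hGU A A.2), rfl⟩
  have hcard := linearIndependent_le_span' v hli _ hspan
  calc #G ≤ #(𝒯.image subsetIndicator) := by simpa using hcard
    _ ≤ #𝒯 := card_image_le
    _ ≤ ∑ i ∈ range (#M + 1), #(U.powersetCard i) := card_biUnion_le
    _ = ∑ i ∈ range (#M + 1), (#U).choose i := by simp only [card_powersetCard]

lemma card_erase_inter_erase {x : α} {A B : Finset α} (hA : x ∈ A) (hB : x ∈ B) :
    #(A.erase x ∩ B.erase x) = #(A ∩ B) - 1 := by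
  rw [erase_inter, inter_erase, erase_idem, card_erase_of_mem (mem_inter.mpr ⟨hA, hB⟩)]

lemma inter_card_mem_of_mem_link {L : Finset ℕ} {F : Finset (Finset α)}
    (hSperner : ∀ A ∈ F, ∀ B ∈ F, A ≠ B → ¬ A ⊆ B)
    (hInt : ∀ A ∈ F, ∀ B ∈ F, A ≠ B → #(A ∩ B) ∈ L) (x : α) :
    ∀ A ∈ (F.filter (x ∈ ·)).image (·.erase x), ∀ B ∈ (F.filter (x ∈ ·)).image (·.erase x),
      A ≠ B → #(A ∩ B) ∈ (L.erase 0).image (· - 1) ∧ #(A ∩ B) < #A := by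
  simp only [mem_image, mem_filter]
  rintro _ ⟨A, ⟨hAF, hxA⟩, rfl⟩ _ ⟨B, ⟨hBF, hxB⟩, rfl⟩ hne
  have hAB : A ≠ B := by rintro rfl; exact hne rfl
  have hpos : 0 < #(A ∩ B) := card_pos.mpr ⟨x, mem_inter.mpr ⟨hxA, hxB⟩⟩
  have hlt : #(A ∩ B) < #A :=
    card_lt_card (inf_lt_left.mpr (hSperner A hAF B hBF hAB))
  rw [card_erase_inter_erase hxA hxB, card_erase_of_mem hxA]
  exact ⟨⟨_, mem_erase.mpr ⟨hpos.ne', hInt A hAF B hBF hAB⟩, rfl⟩, by omega⟩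

end IntersectingFamily

open IntersectingFamily in
theorem stmt_17_general (n s : ℕ) (L : Finset ℕ) (hL : L.card = s) (h0 : 0 ∈ L)
    (F : Finset (Finset (Fin n)))
    (hSperner : ∀ A ∈ F, ∀ B ∈ F, A ≠ B → ¬ A ⊆ B)
    (hInt : ∀ A ∈ F, ∀ B ∈ F, A ≠ B → (A ∩ B).card ∈ L) :
    ∀ x : Fin n, (F.filter (fun A => x ∈ A)).card ≤
      ∑ i ∈ Finset.range s, (n - 1).choose i := by
  intro x
  have hM : #((L.erase 0).image (· - 1)) + 1 ≤ s := by
    have himage := card_image_le (s := L.erase 0) (f := (· - 1))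
    rw [card_erase_of_mem h0, hL] at himage
    have hs : 0 < s := hL ▸ card_pos.mpr ⟨0, h0⟩
    omega
  calc #(F.filter (x ∈ ·)) = #((F.filter (x ∈ ·)).image (·.erase x)) :=
        (card_image_of_injOn ((erase_injOn' x).mono fun A hA => (mem_filter.mp hA).2)).symm
    _ ≤ ∑ i ∈ range (#((L.erase 0).image (· - 1)) + 1), (#(univ.erase x)).choose i := by
        refine card_le_sum_choose_of_inter_card_mem ?_ (inter_card_mem_of_mem_link hSperner hInt x)
        simp only [mem_image]
        rintro _ ⟨A, -, rfl⟩
        exact erase_subset_erase x (subset_univ A)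
    _ ≤ ∑ i ∈ range s, (n - 1).choose i := by
        rw [card_erase_of_mem (mem_univ x), card_univ, Fintype.card_fin]
        exact sum_le_sum_of_subset (range_subset_range.mpr hM)

theorem stmt_17 (n s : ℕ) (L : Finset ℕ) (hL : L.card = s) (h0 : 0 ∈ L)
    (hLne : L ≠ Finset.range s) (hn : n ≥ 3 * s ^ 2)
    (F : Finset (Finset (Fin n)))
    (hSperner : ∀ A ∈ F, ∀ B ∈ F, A ≠ B → ¬ A ⊆ B)
    (hInt : ∀ A ∈ F, ∀ B ∈ F, A ≠ B → (A ∩ B).card ∈ L) :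
    ∀ x : Fin n, (F.filter (fun A => x ∈ A)).card ≤
      ∑ i ∈ Finset.range s, (n - 1).choose i :=
  stmt_17_general n s L hL h0 F hSperner hInt
end

section
/- Let L be a set of non-negative integers and F = {F₁, ..., F_m} ⊆ 2^[n] an L-intersecting Sperner family such that L = {0, 1, ..., s−1}. If additionally n ≥ 2s−1, then |F| ≤ C(n, s). -/
open Finset Nat

lemma choose_mono_aux {n r s : ℕ} (hrs : r ≤ s) (hn : n ≥ 2 * s - 1) :
    n.choose r ≤ n.choose s := by
  induction s with
  | zero => simp [Nat.le_zero.1 hrs]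
  | succ t ih =>
    rcases Nat.lt_or_ge r (t + 1) with h | h
    · have h1 : n.choose r ≤ n.choose t := ih (Nat.lt_succ_iff.1 h) (by omega)
      refine h1.trans ?_
      rcases Nat.lt_or_ge n (2 * t + 2) with h2 | h2
      · have hne : n = 2 * t + 1 := by omega
        rw [hne, Nat.choose_symm_half]
      · exact Nat.choose_le_succ_of_lt_half_left (by omega)
    · have : r = t + 1 := le_antisymm hrs h
      simp [this]

theorem stmt_18 (n s : ℕ) (L : Finset ℕ) (hLs : L = Finset.range s)
    (hn : n ≥ 2 * s - 1)
    (F : Finset (Finset (Fin n)))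
    (hSperner : ∀ A ∈ F, ∀ B ∈ F, A ≠ B → ¬ A ⊆ B)
    (hInt : ∀ A ∈ F, ∀ B ∈ F, A ≠ B → (A ∩ B).card ∈ L) :
    F.card ≤ n.choose s := by
  classical
  subst hLs
  -- intersections of distinct members have size < s
  have hint : ∀ A ∈ F, ∀ B ∈ F, A ≠ B → (A ∩ B).card < s := by
    intro A hA B hB hAB
    simpa using hInt A hA B hB hAB
  -- shrinking function
  have hex : ∀ A : Finset (Fin n), ∃ B ⊆ A, B.card = min s A.card :=
    fun A => Finset.exists_subset_card_eq (min_le_right _ _)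
  choose f hf1 hf2 using hex
  have hsub : ∀ A ∈ F, ∀ B ∈ F, f A ⊆ B → A = B := by
    intro A hA B hB hfb
    by_contra hAB
    rcases Nat.lt_or_ge A.card s with h | h
    · -- f A = A since card < s
      have : f A = A := Finset.eq_of_subset_of_card_le (hf1 A)
        (by rw [hf2]; omega)
      exact hSperner A hA B hB hAB (this ▸ hfb)
    · have h1 : f A ⊆ A ∩ B := Finset.subset_inter (hf1 A) hfb
      have h2 : (A ∩ B).card ≥ s := by
        have := Finset.card_le_card h1
        rw [hf2] at this; omega
      exact absurd (hint A hA B hB hAB) (by omega)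
  set 𝒜 := F.image f with h𝒜
  have hinj : Set.InjOn f F := by
    intro A hA B hB hfe
    exact hsub A hA B hB (hfe ▸ hf1 B)
  have hcard : 𝒜.card = F.card := Finset.card_image_of_injOn hinj
  have hanti : IsAntichain (· ⊆ ·) (𝒜 : Set (Finset (Fin n))) := by
    intro x hx y hy hxy hss
    simp only [h𝒜, coe_image, Set.mem_image, mem_coe] at hx hy
    obtain ⟨A, hA, rfl⟩ := hx
    obtain ⟨B, hB, rfl⟩ := hy
    have : f A ⊆ B := hss.trans (hf1 B)
    exact hxy (congrArg f (hsub A hA B hB this))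
  have hsized : ∀ x ∈ 𝒜, x.card ≤ s := by
    intro x hx
    simp only [h𝒜, mem_image] at hx
    obtain ⟨A, _, rfl⟩ := hx
    rw [hf2]; exact min_le_left _ _
  have hsn : s ≤ n := by
    rcases Nat.eq_zero_or_pos s with rfl | hs
    · exact Nat.zero_le n
    · omega
  have hpos : 0 < (n.choose s : ℚ) := by
    exact_mod_cast Nat.choose_pos hsn
  -- slices above s are empty
  have hslice : ∀ r, s < r → (𝒜 # r) = ∅ := by
    intro r hr
    rw [Finset.eq_empty_iff_forall_notMem]
    intro x hx
    rw [Finset.mem_slice] at hx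
    have := hsized x hx.1
    omega
  have key : (∑ r ∈ range (Fintype.card (Fin n) + 1),
      ((𝒜 # r).card : ℚ) / (Fintype.card (Fin n)).choose s) ≤ 1 := by
    refine le_trans (Finset.sum_le_sum fun r hr => ?_)
      (Finset.sum_card_slice_div_choose_le_one hanti)
    rcases Nat.lt_or_ge s r with h | h
    · simp [hslice r h]
    · apply div_le_div_of_nonneg_left
      · exact_mod_cast Nat.zero_le _
      · rw [mem_range] at hr
        exact_mod_cast Nat.choose_pos (Nat.lt_succ_iff.1 (by simpa using hr))
      · simp only [Fintype.card_fin]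
        exact_mod_cast choose_mono_aux h hn
  rw [← Finset.sum_div, div_le_one (by simpa using hpos)] at key
  have : (∑ r ∈ range (Fintype.card (Fin n) + 1), ((𝒜 # r).card : ℚ)) = (𝒜.card : ℚ) := by
    rw [← Nat.cast_sum]
    norm_cast
    rw [← Finset.sum_card_slice (𝒜 := 𝒜)]
    congr 1
    ext r; simp [Finset.mem_Iic, Finset.mem_range, Nat.lt_succ_iff]
  rw [this] at key
  simp only [Fintype.card_fin] at key
  exact_mod_cast hcard ▸ key
end

section
/- Let F ⊆ 2^[n] be a family such that |A \ B| ∈ {1, 2, ..., k} for all distinct ordered pairs A, B ∈ F. Then |F| ≤ ∑_{i=0}^{k} C(n, i) − |S|, where S is the set of k-element subsets of [n] not contained in any member of F. -/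
/-!
Identify a subset `X ⊆ α` with its indicator vector, so that the multilinear monomial
`∏_{ℓ ∈ T} x_ℓ` becomes the function `X ↦ [T ⊆ X]`; the functions spanned by monomials of degree
at most `k` form a space of dimension at most `∑_{i ≤ k} C(n, i)`, where `n = |α|`. To `A ∈ F` attach the degree-`k`
function `X ↦ ∏_{j=1}^{k} (|A \ X| - j)`: it vanishes at every other member of `F` but not at `A`.
To `T ∈ S` attach the monomial `X ↦ [T ⊆ X]`, which vanishes on `F` and, among `k`-sets, only
fails to vanish at `T`. Evaluating first on `F` and then on `S` shows that these `|F| + |S|`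
functions are linearly independent.
-/

open Finset Submodule

namespace FrankWilson

section Monomials

variable (K : Type*) {α : Type*} [Field K] [DecidableEq α]

def monomial (T : Finset α) : Finset α → K :=
  fun X => if T ⊆ X then 1 else 0

variable (α) in
def degreeLE (d : ℕ) : Submodule K (Finset α → K) :=
  span K (Set.range fun T : {T : Finset α // #T ≤ d} => monomial K T.1)

variable {K}

theorem monomial_mul_monomial (T T' : Finset α) :
    monomial K T * monomial K T' = monomial K (T ∪ T') := by
  funext X
  simp only [monomial, Pi.mul_apply, union_subset_iff]
  split_ifs <;> simp_all

theorem monomial_empty : monomial K (∅ : Finset α) = 1 := by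
  funext X
  simp [monomial]

theorem monomial_apply_ne_zero_iff_of_card_eq {T T' : Finset α} (h : #T = #T') :
    monomial K T T' ≠ 0 ↔ T = T' := by
  simp only [monomial, ne_eq, ite_eq_right_iff, one_ne_zero, imp_false, not_not]
  exact ⟨fun hsub => eq_of_subset_of_card_le hsub h.ge, fun hTT' => hTT' ▸ subset_refl T⟩

theorem monomial_mem_degreeLE {T : Finset α} {d : ℕ} (h : #T ≤ d) :
    monomial K T ∈ degreeLE K α d :=
  subset_span ⟨⟨T, h⟩, rfl⟩

theorem one_mem_degreeLE (d : ℕ) : (1 : Finset α → K) ∈ degreeLE K α d := by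
  rw [← monomial_empty (K := K) (α := α)]; exact monomial_mem_degreeLE (Nat.zero_le d)

theorem degreeLE_mul_le (a b : ℕ) : degreeLE K α a * degreeLE K α b ≤ degreeLE K α (a + b) := by
  rw [degreeLE, degreeLE, span_mul_span, span_le]
  rintro _ ⟨_, ⟨T, rfl⟩, _, ⟨T', rfl⟩, rfl⟩
  change monomial K T.1 * monomial K T'.1 ∈ _
  rw [monomial_mul_monomial]
  exact monomial_mem_degreeLE ((card_union_le _ _).trans (add_le_add T.2 T'.2))

theorem prod_mem_degreeLE {ι : Type*} (s : Finset ι) {f : ι → Finset α → K}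
    (hf : ∀ i ∈ s, f i ∈ degreeLE K α 1) : ∏ i ∈ s, f i ∈ degreeLE K α #s := by
  induction s using Finset.cons_induction with
  | empty => exact one_mem_degreeLE 0
  | cons i s hi ih =>
    rw [prod_cons, card_cons, add_comm]
    exact degreeLE_mul_le 1 #s <| mul_mem_mul (hf i (mem_cons_self i s))
      (ih fun j hj => hf j (mem_cons.mpr (Or.inr hj)))

theorem card_sdiff_sub_mem_degreeLE_one (A : Finset α) (c : K) :
    (fun X => (#(A \ X) : K) - c) ∈ degreeLE K α 1 := by
  have hlin : (fun X => (#(A \ X) : K) - c) = ∑ i ∈ A, (1 - monomial K {i}) - c • 1 := by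
    funext X
    simp only [Pi.sub_apply, Pi.smul_apply, Pi.one_apply, Finset.sum_apply, monomial,
      singleton_subset_iff, smul_eq_mul, mul_one, sdiff_eq_filter, card_filter]
    push_cast
    congr 1
    exact sum_congr rfl fun i _ => by split_ifs <;> simp
  rw [hlin]
  exact sub_mem (sum_mem fun i _ => sub_mem (one_mem_degreeLE 1) (monomial_mem_degreeLE (by simp)))
    (smul_mem _ c (one_mem_degreeLE 1))

theorem card_le_sum_choose_of_linearIndependent [Fintype α] {d : ℕ} {ι : Type*} [Fintype ι]
    {v : ι → Finset α → K} (hv : LinearIndependent K v) (hvd : ∀ i, v i ∈ degreeLE K α d) :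
    Fintype.card ι ≤ ∑ i ∈ range (d + 1), (Fintype.card α).choose i := by
  have hspan : span K (Set.range v) ≤ degreeLE K α d := span_le.mpr (Set.range_subset_iff.mpr hvd)
  have hsupp : Fintype.card {T : Finset α // #T ≤ d} ≤
      ∑ i ∈ range (d + 1), (Fintype.card α).choose i := by
    simp_rw [Fintype.card_subtype, ← card_univ, ← card_powersetCard]
    refine (card_le_card fun T hT => mem_biUnion.2 ⟨#T, ?_⟩).trans card_biUnion_le
    exact ⟨mem_range.2 (Nat.lt_succ_of_le (mem_filter.1 hT).2), mem_powersetCard_univ.2 rfl⟩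
  calc Fintype.card ι = Module.finrank K (span K (Set.range v)) := (finrank_span_eq_card hv).symm
    _ ≤ Module.finrank K (degreeLE K α d) := Submodule.finrank_mono hspan
    _ ≤ Fintype.card {T : Finset α // #T ≤ d} := finrank_range_le_card _
    _ ≤ _ := hsupp

end Monomials

section SdiffPoly

variable (K : Type*) {α : Type*} [Field K] [DecidableEq α]

def sdiffPoly (k : ℕ) (A : Finset α) : Finset α → K :=
  ∏ j ∈ range k, fun X => (#(A \ X) : K) - (j + 1)

variable {K}

theorem sdiffPoly_apply (k : ℕ) (A X : Finset α) :
    sdiffPoly K k A X = ∏ j ∈ range k, ((#(A \ X) : K) - (j + 1)) := by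
  rw [sdiffPoly, prod_apply]

theorem sdiffPoly_mem_degreeLE (k : ℕ) (A : Finset α) : sdiffPoly K k A ∈ degreeLE K α k := by
  have h := prod_mem_degreeLE (range k) fun j _ => card_sdiff_sub_mem_degreeLE_one A ((j : K) + 1)
  rwa [card_range] at h

theorem sdiffPoly_self_ne_zero [CharZero K] (k : ℕ) (A : Finset α) : sdiffPoly K k A A ≠ 0 := by
  rw [sdiffPoly_apply, sdiff_self, bot_eq_empty, card_empty, Nat.cast_zero]
  exact prod_ne_zero_iff.mpr fun j _ => by rw [zero_sub, neg_ne_zero]; exact_mod_cast j.succ_ne_zero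

theorem sdiffPoly_eq_zero {k : ℕ} {A B : Finset α} (h₁ : 1 ≤ #(A \ B)) (h₂ : #(A \ B) ≤ k) :
    sdiffPoly K k A B = 0 := by
  rw [sdiffPoly_apply]
  refine prod_eq_zero (i := #(A \ B) - 1) (mem_range.mpr (by omega)) ?_
  rw [sub_eq_zero, ← Nat.cast_add_one, Nat.sub_add_cancel h₁]

end SdiffPoly

section Independence

variable {K X ι κ : Type*} [Field K]

theorem sum_smul_apply_of_diagonal [Fintype ι] {f : ι → X → K} {a : ι → X}
    (hf : ∀ i j, f i (a j) ≠ 0 ↔ i = j) (c : ι → K) (j : ι) :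
    (∑ i, c i • f i) (a j) = c j * f j (a j) := by
  simp only [Finset.sum_apply, Pi.smul_apply, smul_eq_mul]
  exact sum_eq_single j (fun i _ hij => by rw [not_not.mp (mt (hf i j).mp hij), mul_zero])
    (by simp)

theorem linearIndependent_sumElim_of_eval [Fintype ι] [Fintype κ] {f : ι → X → K}
    {g : κ → X → K} {a : ι → X} {b : κ → X} (hfa : ∀ i j, f i (a j) ≠ 0 ↔ i = j)
    (hgb : ∀ i j, g i (b j) ≠ 0 ↔ i = j) (hga : ∀ i j, g i (a j) = 0) :
    LinearIndependent K (Sum.elim f g) := by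
  rw [Fintype.linearIndependent_iff]
  intro c hc
  simp only [Fintype.sum_sum_type, Sum.elim_inl, Sum.elim_inr] at hc
  have hcf : ∀ i, c (Sum.inl i) = 0 := fun i => by
    have hgi : (∑ j, c (Sum.inr j) • g j) (a i) = 0 := by simp [hga]
    have := congrFun hc (a i)
    simp only [Pi.add_apply, hgi, add_zero, Pi.zero_apply, sum_smul_apply_of_diagonal hfa] at this
    exact (mul_eq_zero.mp this).resolve_right ((hfa i i).mpr rfl)
  have hcg : ∀ j, c (Sum.inr j) = 0 := fun j => by
    have := congrFun hc (b j)
    simp only [hcf, zero_smul, sum_const_zero, zero_add, Pi.zero_apply,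
      sum_smul_apply_of_diagonal hgb] at this
    exact (mul_eq_zero.mp this).resolve_right ((hgb j j).mpr rfl)
  rintro (i | j)
  exacts [hcf i, hcg j]

end Independence

end FrankWilson

open FrankWilson in
theorem stmt_19 (n k : ℕ) (F : Finset (Finset (Fin n)))
    (hdiff : ∀ A ∈ F, ∀ B ∈ F, A ≠ B → 1 ≤ (A \ B).card ∧ (A \ B).card ≤ k) :
    F.card ≤ ∑ i ∈ Finset.range (k + 1), n.choose i -
      ((Finset.powersetCard k (Finset.univ : Finset (Fin n))).filter
        (fun T => ∀ A ∈ F, ¬ T ⊆ A)).card := by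
  set S := (powersetCard k (univ : Finset (Fin n))).filter fun T => ∀ A ∈ F, ¬ T ⊆ A
  have hS_card : ∀ T ∈ S, #T = k := fun T hT => (mem_powersetCard.mp (mem_filter.mp hT).1).2
  have hS_not_subset : ∀ T ∈ S, ∀ A ∈ F, ¬ T ⊆ A := fun T hT => (mem_filter.mp hT).2
  have hli : LinearIndependent ℝ
      (Sum.elim (fun A : F => sdiffPoly ℝ k A.1) fun T : S => monomial ℝ T.1) := by
    refine linearIndependent_sumElim_of_eval (a := Subtype.val) (b := Subtype.val) ?_ ?_ ?_
    · intro A B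
      refine ⟨fun h => Subtype.ext ?_, by rintro rfl; exact sdiffPoly_self_ne_zero k A.1⟩
      by_contra hAB
      exact h (sdiffPoly_eq_zero (hdiff A A.2 B B.2 hAB).1 (hdiff A A.2 B B.2 hAB).2)
    · intro T T'
      rw [monomial_apply_ne_zero_iff_of_card_eq (by rw [hS_card T T.2, hS_card T' T'.2]),
        Subtype.ext_iff]
    · intro T A
      exact if_neg (hS_not_subset T T.2 A A.2)
  have hcard := card_le_sum_choose_of_linearIndependent hli (d := k) <| by
    rintro (A | T)
    exacts [sdiffPoly_mem_degreeLE k A.1, monomial_mem_degreeLE (hS_card T T.2).le]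
  simp only [Fintype.card_sum, Fintype.card_coe, Fintype.card_fin] at hcard
  omega
end
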